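/- arXiv:0912.3366 — 3 statements merged into one kernel-verified Lean document; each statement's English description precedes it below -/
import Mathlib

section
/- Let F, G ∈ S(ℝ^{2d}). Then the twisted convolution F ⊛ G belongs to S(ℝ^{2d}), and (F, G) ↦ F ⊛ G is a continuous bilinear map from S(ℝ^{2d}) × S(ℝ^{2d}) to S(ℝ^{2d}). -/
open MeasureTheory Real Complex
open scoped RealInnerProductSpace

noncomputable section

/-- Euclidean space ℝ^d. -/
abbrev Ed (d : ℕ) := EuclideanSpace ℝ (Fin d)

/-- Japanese bracket ⟨x⟩ = (1+|x|²)^{1/2}. -/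
def jap {d : ℕ} (x : Ed d) : ℝ := (1 + ‖x‖ ^ 2) ^ ((1 : ℝ) / 2)

/-- standard basis vector of ℝ^d. -/
def eVec (d : ℕ) (i : Fin d) : Ed d := EuclideanSpace.single i 1

/-- The family of directions for a mixed partial derivative ∂_x^α ∂_ξ^β :
`n` basis directions in the `x`-slot, followed by `m` basis directions in the `ξ`-slot. -/
def dirs (d n m : ℕ) (i : Fin n → Fin d) (j : Fin m → Fin d) :
    Fin (n + m) → Ed d × Ed d :=
  Fin.addCases (fun k => (eVec d (i k), 0)) (fun k => (0, eVec d (j k)))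

/-- Mixed partial derivative, as iterated Fréchet derivative applied to basis directions. -/
def mixedPartial {d : ℕ} {F : Type*} [NormedAddCommGroup F] [NormedSpace ℝ F]
    (n m : ℕ) (i : Fin n → Fin d) (j : Fin m → Fin d) (f : Ed d × Ed d → F)
    (z : Ed d × Ed d) : F :=
  iteratedFDeriv ℝ (n + m) f z (dirs d n m i j)

/-- ω is a positive, polynomially moderate weight on ℝ^{2d}, i.e. ω ∈ P(ℝ^{2d}). -/
def IsModerateWeight {d : ℕ} (ω : Ed d × Ed d → ℝ) : Prop :=
  (∀ z, 0 < ω z) ∧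
    ∃ C N : ℝ, 0 < C ∧ 0 < N ∧
      ∀ X Y : Ed d × Ed d, ω (X + Y) ≤ C * ω X * ((1 + ‖Y‖ ^ 2) ^ ((1 : ℝ) / 2)) ^ N

/-- ω ∈ P_{r,ρ}(ℝ^{2d}). -/
def InPrr {d : ℕ} (r ρ : ℝ) (ω : Ed d × Ed d → ℝ) : Prop :=
  IsModerateWeight ω ∧ ContDiff ℝ (⊤ : ℕ∞) ω ∧
    ∀ (n m : ℕ) (i : Fin n → Fin d) (j : Fin m → Fin d),
      ∃ C : ℝ, ∀ x ξ : Ed d,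
        jap x ^ (r * n) * jap ξ ^ (ρ * m) * |mixedPartial n m i j ω (x, ξ)| ≤ C * ω (x, ξ)

/-- a ∈ SG^{(ω₀)}_{r,ρ}(ℝ^{2d}). -/
def InSG {d : ℕ} (r ρ : ℝ) (ω₀ : Ed d × Ed d → ℝ) (a : Ed d × Ed d → ℂ) : Prop :=
  ContDiff ℝ (⊤ : ℕ∞) a ∧
    ∀ (n m : ℕ) (i : Fin n → Fin d) (j : Fin m → Fin d),
      ∃ C : ℝ, ∀ x ξ : Ed d,
        ‖mixedPartial n m i j a (x, ξ)‖ ≤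
          C * jap x ^ (-(r * n)) * jap ξ ^ (-(ρ * m)) * ω₀ (x, ξ)

/-- a ∈ SG^{m,μ}_{r,ρ}(ℝ^{2d}). -/
def InSGpoly {d : ℕ} (m μ r ρ : ℝ) (a : Ed d × Ed d → ℂ) : Prop :=
  InSG r ρ (fun z => jap z.1 ^ m * jap z.2 ^ μ) a

/-- Γ is an open cone in ℝ^d ∖ {0}. -/
def IsOpenCone {d : ℕ} (Γ : Set (Ed d)) : Prop :=
  IsOpen Γ ∧ (0 : Ed d) ∉ Γ ∧ ∀ x ∈ Γ, ∀ t : ℝ, 0 < t → t • x ∈ Γ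

/-- a is ψ-invertible with respect to ω₀ at (x₀, ξ₀) ∈ ℝ^d × (ℝ^d ∖ {0}). -/
def PsiInvertibleAt {d : ℕ} (ω₀ : Ed d × Ed d → ℝ) (a : Ed d × Ed d → ℂ)
    (x₀ ξ₀ : Ed d) : Prop :=
  ∃ (X Γ : Set (Ed d)) (R c : ℝ),
    IsOpen X ∧ x₀ ∈ X ∧ IsOpenCone Γ ∧ ξ₀ ∈ Γ ∧ 0 < R ∧ 0 < c ∧
      ∀ x ∈ X, ∀ ξ ∈ Γ, R ≤ ‖ξ‖ → c * ω₀ (x, ξ) ≤ ‖a (x, ξ)‖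

/-- a is e-invertible with respect to ω₀ at (x₀, ξ₀) ∈ (ℝ^d ∖ {0}) × ℝ^d. -/
def EInvertibleAt {d : ℕ} (ω₀ : Ed d × Ed d → ℝ) (a : Ed d × Ed d → ℂ)
    (x₀ ξ₀ : Ed d) : Prop :=
  ∃ (Γ X : Set (Ed d)) (R c : ℝ),
    IsOpenCone Γ ∧ x₀ ∈ Γ ∧ IsOpen X ∧ ξ₀ ∈ X ∧ 0 < R ∧ 0 < c ∧
      ∀ x ∈ Γ, R ≤ ‖x‖ → ∀ ξ ∈ X, c * ω₀ (x, ξ) ≤ ‖a (x, ξ)‖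

/-- a is ψe-invertible with respect to ω₀ at (x₀, ξ₀) ∈ (ℝ^d ∖ {0}) × (ℝ^d ∖ {0}). -/
def PsiEInvertibleAt {d : ℕ} (ω₀ : Ed d × Ed d → ℝ) (a : Ed d × Ed d → ℂ)
    (x₀ ξ₀ : Ed d) : Prop :=
  ∃ (Γ₁ Γ₂ : Set (Ed d)) (R₁ R₂ c : ℝ),
    IsOpenCone Γ₁ ∧ x₀ ∈ Γ₁ ∧ IsOpenCone Γ₂ ∧ ξ₀ ∈ Γ₂ ∧ 0 < R₁ ∧ 0 < R₂ ∧ 0 < c ∧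
      ∀ x ∈ Γ₁, R₁ ≤ ‖x‖ → ∀ ξ ∈ Γ₂, R₂ ≤ ‖ξ‖ → c * ω₀ (x, ξ) ≤ ‖a (x, ξ)‖

/-- Char^ψ_{(ω₀)}(a). -/
def CharPsi {d : ℕ} (ω₀ : Ed d × Ed d → ℝ) (a : Ed d × Ed d → ℂ) : Set (Ed d × Ed d) :=
  {p | p.2 ≠ 0 ∧ ¬ PsiInvertibleAt ω₀ a p.1 p.2}

/-- Char^e_{(ω₀)}(a). -/
def CharE {d : ℕ} (ω₀ : Ed d × Ed d → ℝ) (a : Ed d × Ed d → ℂ) : Set (Ed d × Ed d) :=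
  {p | p.1 ≠ 0 ∧ ¬ EInvertibleAt ω₀ a p.1 p.2}

/-- Char^{ψe}_{(ω₀)}(a). -/
def CharPsiE {d : ℕ} (ω₀ : Ed d × Ed d → ℝ) (a : Ed d × Ed d → ℂ) : Set (Ed d × Ed d) :=
  {p | p.1 ≠ 0 ∧ p.2 ≠ 0 ∧ ¬ PsiEInvertibleAt ω₀ a p.1 p.2}

/-- Char_{(ω₀)}(a): the full characteristic set. -/
def CharSet {d : ℕ} (ω₀ : Ed d × Ed d → ℝ) (a : Ed d × Ed d → ℂ) : Set (Ed d × Ed d) :=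
  CharPsi ω₀ a ∪ CharE ω₀ a ∪ CharPsiE ω₀ a

/-- a is SG-elliptic with respect to ω₀. -/
def SGElliptic {d : ℕ} (ω₀ : Ed d × Ed d → ℝ) (a : Ed d × Ed d → ℂ) : Prop :=
  ∃ K : Set (Ed d × Ed d), IsCompact K ∧
    ∃ c : ℝ, 0 < c ∧ ∀ z ∉ K, c * ω₀ z ≤ ‖a z‖

/-- φ ∈ C_{x₀}(X): cutoff function with respect to x₀ and X. -/
def IsCutoff {d : ℕ} (X : Set (Ed d)) (x₀ : Ed d) (φ : Ed d → ℝ) : Prop :=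
  ContDiff ℝ (⊤ : ℕ∞) φ ∧ (∀ x, 0 ≤ φ x ∧ φ x ≤ 1) ∧ HasCompactSupport φ ∧
    tsupport φ ⊆ X ∧ ∃ U : Set (Ed d), IsOpen U ∧ x₀ ∈ U ∧ ∀ x ∈ U, φ x = 1

/-- ψ ∈ C^dir_{ξ₀}(Γ): directional cutoff function with respect to ξ₀ and Γ. -/
def IsDirCutoff {d : ℕ} (Γ : Set (Ed d)) (ξ₀ : Ed d) (ψ : Ed d → ℝ) : Prop :=
  ContDiff ℝ (⊤ : ℕ∞) ψ ∧ (∀ ξ, 0 ≤ ψ ξ ∧ ψ ξ ≤ 1) ∧ Function.support ψ ⊆ Γ ∧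
    ∃ (R : ℝ) (Γ₁ : Set (Ed d)), 0 < R ∧ IsOpenCone Γ₁ ∧ Γ₁ ⊆ Γ ∧ ξ₀ ∈ Γ₁ ∧
      (∀ t : ℝ, 1 ≤ t → ∀ ξ : Ed d, R ≤ ‖ξ‖ → ψ (t • ξ) = ψ ξ) ∧
      (∀ ξ ∈ Γ₁, R ≤ ‖ξ‖ → ψ ξ = 1)

/-- The Fourier transform ĝ(ξ) = (2π)^{-d/2} ∫ g(y) e^{-i⟨y,ξ⟩} dy, as an integral. -/
def fourierInt {d : ℕ} (g : Ed d → ℂ) (ξ : Ed d) : ℂ :=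
  (((2 * π) ^ (-(d : ℝ) / 2) : ℝ) : ℂ) *
    ∫ y : Ed d, g y * Complex.exp (-(Complex.I * (⟪y, ξ⟫ : ℝ)))

/-- The Kohn–Nirenberg pseudo-differential operator
Op(a)f(x) = (2π)^{-d/2} ∫ a(x,ξ) f̂(ξ) e^{i⟨x,ξ⟩} dξ. -/
def OpKN {d : ℕ} (a : Ed d × Ed d → ℂ) (f : Ed d → ℂ) (x : Ed d) : ℂ :=
  (((2 * π) ^ (-(d : ℝ) / 2) : ℝ) : ℂ) *
    ∫ ξ : Ed d, a (x, ξ) * fourierInt f ξ * Complex.exp (Complex.I * (⟪x, ξ⟫ : ℝ))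

/-- The short-time Fourier transform
V_φ f(x,ξ) = (2π)^{-d/2} ∫ f(y) conj(φ(y−x)) e^{-i⟨y,ξ⟩} dy, as an integral. -/
def stftInt {d : ℕ} (φ f : Ed d → ℂ) (x ξ : Ed d) : ℂ :=
  (((2 * π) ^ (-(d : ℝ) / 2) : ℝ) : ℂ) *
    ∫ y : Ed d, f y * (starRingEnd ℂ) (φ (y - x)) * Complex.exp (-(Complex.I * (⟪y, ξ⟫ : ℝ)))

section TwistedAux

open SchwartzMap
open scoped FourierTransform

noncomputable section

variable {E' : Type*} [NormedAddCommGroup E'] [NormedSpace ℝ E']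

/-- The phase-derivative auxiliary CLM. -/
def tcM (B : E' →L[ℝ] E' →L[ℝ] ℝ) : E' →L[ℝ] E' →L[ℝ] ℂ :=
  (-Complex.I) • ((ContinuousLinearMap.compL ℝ E' ℝ ℂ Complex.ofRealCLM).comp (B + B.flip))

lemma tc_hasFDerivAt (B : E' →L[ℝ] E' →L[ℝ] ℝ) (w : E') :
    HasFDerivAt (fun w => Complex.exp (-(Complex.I * (B w w : ℝ))))
      (Complex.exp (-(Complex.I * (B w w : ℝ))) • tcM B w) w := by
  have hb : IsBoundedBilinearMap ℝ (fun p : E' × E' => B p.1 p.2) :=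
    B.isBoundedBilinearMap
  have hdiag : HasFDerivAt (fun w : E' => (w, w))
      ((ContinuousLinearMap.id ℝ E').prod (ContinuousLinearMap.id ℝ E')) w :=
    ((ContinuousLinearMap.id ℝ E').prod (ContinuousLinearMap.id ℝ E')).hasFDerivAt
  have hq : HasFDerivAt (fun w : E' => B w w) ((B + B.flip) w) w := by
    have h0 := HasFDerivAt.clm_apply (B.hasFDerivAt (x := w)) (hasFDerivAt_id w)
    exact h0.congr_fderiv (by ext v; simp)
  have h1 : HasFDerivAt (fun w : E' => ((B w w : ℝ) : ℂ))
      (Complex.ofRealCLM.comp ((B + B.flip) w)) w :=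
    Complex.ofRealCLM.hasFDerivAt.comp w hq
  have h2 : HasFDerivAt (fun w : E' => -(Complex.I * ((B w w : ℝ) : ℂ)))
      (tcM B w) w := by
    have h3 := HasFDerivAt.neg (HasFDerivAt.const_mul h1 Complex.I)
    refine h3.congr_fderiv ?_
    ext v
    simp [tcM]
    ring
  exact h2.cexp

lemma tc_contDiff (B : E' →L[ℝ] E' →L[ℝ] ℝ) :
    ContDiff ℝ (⊤ : ℕ∞) (fun w => Complex.exp (-(Complex.I * (B w w : ℝ)))) := by
  apply ContDiff.cexp
  exact ContDiff.neg (contDiff_const.mul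
    (Complex.ofRealCLM.contDiff.comp ((B.contDiff).clm_apply contDiff_id)))

lemma tc_hasTemperateGrowth (B : E' →L[ℝ] E' →L[ℝ] ℝ) :
    Function.HasTemperateGrowth (fun w => Complex.exp (-(Complex.I * (B w w : ℝ)))) := by
  set u : E' → ℂ := fun w => Complex.exp (-(Complex.I * (B w w : ℝ))) with hu
  have hcd : ContDiff ℝ (⊤ : ℕ∞) u := tc_contDiff B
  have hnorm : ∀ w, ‖u w‖ = 1 := by
    intro w
    simp [hu, Complex.norm_exp]
  have hfd : fderiv ℝ u = fun w => u w • tcM B w :=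
    funext fun w => (tc_hasFDerivAt B w).fderiv
  have key : ∀ n : ℕ, ∃ (k : ℕ) (C : ℝ), 0 ≤ C ∧ ∀ i ≤ n, ∀ x,
      ‖iteratedFDeriv ℝ i u x‖ ≤ C * (1 + ‖x‖) ^ k := by
    intro n
    induction n with
    | zero =>
      refine ⟨0, 1, zero_le_one, ?_⟩
      intro i hi x
      interval_cases i
      simp [norm_iteratedFDeriv_zero, hnorm x]
    | succ n IH =>
      obtain ⟨k, C, hC, hIH⟩ := IH
      obtain ⟨k', C', hC', hM⟩ :=
        Function.HasTemperateGrowth.norm_iteratedFDeriv_le_uniform ((tcM B).hasTemperateGrowth) n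
      refine ⟨k + k', C + (n+1) * 2^n * C * C', by positivity, ?_⟩
      intro i hi x
      have h1x : (1:ℝ) ≤ 1 + ‖x‖ := by simp [norm_nonneg]
      have hpow : (0:ℝ) ≤ (1 + ‖x‖) ^ (k + k') := by positivity
      rcases Nat.lt_or_ge i (n+1) with h | h
      · calc ‖iteratedFDeriv ℝ i u x‖ ≤ C * (1 + ‖x‖) ^ k := hIH i (Nat.lt_succ_iff.mp h) x
        _ ≤ (C + (n+1) * 2^n * C * C') * (1 + ‖x‖) ^ (k + k') := by
            refine mul_le_mul ?_ (pow_le_pow_right₀ h1x (Nat.le_add_right k k')) (by positivity) ?_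
            · nlinarith [mul_nonneg (mul_nonneg (mul_nonneg (by positivity : (0:ℝ) ≤ ((n:ℝ)+1)) (by positivity : (0:ℝ) ≤ (2:ℝ)^n)) hC) hC']
            · positivity
      · have hi' : i = n + 1 := le_antisymm hi h
        subst hi'
        rw [← norm_iteratedFDeriv_fderiv, hfd]
        have hbound := norm_iteratedFDeriv_smul_le (𝕜 := ℝ) (f := u)
          (g := fun w => tcM B w) (hcd.of_le (by exact_mod_cast le_top)) ((tcM B).contDiff.of_le le_top) x
          (mod_cast le_top : (n : WithTop ℕ∞) ≤ ((⊤ : ℕ∞) : WithTop ℕ∞))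
        refine hbound.trans ?_
        have hterm : ∀ i ∈ Finset.range (n+1),
            (n.choose i : ℝ) * ‖iteratedFDeriv ℝ i u x‖ *
              ‖iteratedFDeriv ℝ (n-i) (⇑(tcM B)) x‖ ≤
            2^n * ((C * (1+‖x‖)^k) * (C' * (1+‖x‖)^k')) := by
          intro i hiR
          have hin : i ≤ n := Nat.lt_succ_iff.mp (Finset.mem_range.mp hiR)
          have h1 := hIH i hin x
          have h2 := hM (n-i) (Nat.sub_le n i) x
          have h3 : (n.choose i : ℝ) ≤ 2^n := by
            have : n.choose i ≤ 2^n := by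
              rw [← Nat.sum_range_choose n]
              exact Finset.single_le_sum (f := fun j => n.choose j)
                (fun _ _ => Nat.zero_le _) hiR
            exact_mod_cast this
          calc (n.choose i : ℝ) * ‖iteratedFDeriv ℝ i u x‖ *
                ‖iteratedFDeriv ℝ (n-i) (⇑(tcM B)) x‖
              ≤ 2^n * (C * (1+‖x‖)^k) * (C' * (1+‖x‖)^k') := by
                refine mul_le_mul (mul_le_mul h3 h1 (norm_nonneg _) (by positivity)) h2
                  (norm_nonneg _) (by positivity)
            _ = 2^n * ((C * (1+‖x‖)^k) * (C' * (1+‖x‖)^k')) := by ring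
        calc ∑ i ∈ Finset.range (n+1), (n.choose i : ℝ) * ‖iteratedFDeriv ℝ i u x‖ *
              ‖iteratedFDeriv ℝ (n-i) (⇑(tcM B)) x‖
            ≤ ∑ _i ∈ Finset.range (n+1),
              2^n * ((C * (1+‖x‖)^k) * (C' * (1+‖x‖)^k')) := Finset.sum_le_sum hterm
          _ = (n+1) * 2^n * C * C' * (1+‖x‖)^(k+k') := by
              rw [Finset.sum_const, Finset.card_range]
              rw [pow_add]
              ring
          _ ≤ (C + (n+1) * 2^n * C * C') * (1 + ‖x‖) ^ (k + k') := by
              nlinarith [mul_nonneg hC hpow]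
  refine ⟨hcd.of_le (by simp), fun n => ?_⟩
  obtain ⟨k, C, hC, h⟩ := key n
  exact ⟨k, C, fun x => h n le_rfl x⟩

end

section Tensor

variable {E1 E2 : Type*} [NormedAddCommGroup E1] [NormedSpace ℝ E1]
  [NormedAddCommGroup E2] [NormedSpace ℝ E2]

lemma tensor_smooth (F : 𝓢(E1, ℂ)) (G : 𝓢(E2, ℂ)) :
    ContDiff ℝ ((⊤ : ℕ∞) : WithTop ℕ∞) (fun p : E1 × E2 => F p.1 * G p.2) :=
  ((F.smooth ⊤).comp contDiff_fst).mul ((G.smooth ⊤).comp contDiff_snd)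

lemma norm_iteratedFDeriv_comp_fst (F : 𝓢(E1, ℂ)) (i : ℕ) (x : E1 × E2) :
    ‖iteratedFDeriv ℝ i (fun p : E1 × E2 => F p.1) x‖ ≤ ‖iteratedFDeriv ℝ i F x.1‖ := by
  have h := ContinuousLinearMap.iteratedFDeriv_comp_right (ContinuousLinearMap.fst ℝ E1 E2)
      (F.smooth ⊤) x (i := i) (by exact_mod_cast le_top)
  have h2 : (fun p : E1 × E2 => F p.1) = (⇑F ∘ ⇑(ContinuousLinearMap.fst ℝ E1 E2)) := rfl
  rw [h2, h]
  refine (ContinuousMultilinearMap.norm_compContinuousLinearMap_le _ _).trans ?_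
  have hfst : ‖ContinuousLinearMap.fst ℝ E1 E2‖ ≤ 1 :=
    ContinuousLinearMap.opNorm_le_bound _ zero_le_one (fun p => by simpa using norm_fst_le p)
  calc ‖iteratedFDeriv ℝ i (⇑F) x.1‖ * ∏ _j : Fin i, ‖ContinuousLinearMap.fst ℝ E1 E2‖
      ≤ ‖iteratedFDeriv ℝ i (⇑F) x.1‖ * ∏ _j : Fin i, (1:ℝ) := by
        refine mul_le_mul_of_nonneg_left ?_ (norm_nonneg _)
        exact Finset.prod_le_prod (fun _ _ => norm_nonneg _) (fun _ _ => hfst)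
    _ = ‖iteratedFDeriv ℝ i (⇑F) x.1‖ := by simp

lemma norm_iteratedFDeriv_comp_snd (G : 𝓢(E2, ℂ)) (i : ℕ) (x : E1 × E2) :
    ‖iteratedFDeriv ℝ i (fun p : E1 × E2 => G p.2) x‖ ≤ ‖iteratedFDeriv ℝ i G x.2‖ := by
  have h := ContinuousLinearMap.iteratedFDeriv_comp_right (ContinuousLinearMap.snd ℝ E1 E2)
      (G.smooth ⊤) x (i := i) (by exact_mod_cast le_top)
  have h2 : (fun p : E1 × E2 => G p.2) = (⇑G ∘ ⇑(ContinuousLinearMap.snd ℝ E1 E2)) := rfl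
  rw [h2, h]
  refine (ContinuousMultilinearMap.norm_compContinuousLinearMap_le _ _).trans ?_
  have hsnd : ‖ContinuousLinearMap.snd ℝ E1 E2‖ ≤ 1 :=
    ContinuousLinearMap.opNorm_le_bound _ zero_le_one (fun p => by simpa using norm_snd_le p)
  calc ‖iteratedFDeriv ℝ i (⇑G) x.2‖ * ∏ _j : Fin i, ‖ContinuousLinearMap.snd ℝ E1 E2‖
      ≤ ‖iteratedFDeriv ℝ i (⇑G) x.2‖ * ∏ _j : Fin i, (1:ℝ) := by
        refine mul_le_mul_of_nonneg_left ?_ (norm_nonneg _)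
        exact Finset.prod_le_prod (fun _ _ => norm_nonneg _) (fun _ _ => hsnd)
    _ = ‖iteratedFDeriv ℝ i (⇑G) x.2‖ := by simp

lemma tensor_bound (k n : ℕ) (F : 𝓢(E1,ℂ)) (G : 𝓢(E2,ℂ)) (x : E1 × E2) :
    ‖x‖ ^ k * ‖iteratedFDeriv ℝ n (fun p : E1 × E2 => F p.1 * G p.2) x‖ ≤
      2^n * (2^k * ((Finset.Iic (k,n)).sup (schwartzSeminormFamily ℝ E1 ℂ) F)) *
        (2^k * ((Finset.Iic (k,n)).sup (schwartzSeminormFamily ℝ E2 ℂ) G)) := by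
  have hf : ContDiff ℝ ((⊤ : ℕ∞) : WithTop ℕ∞) (fun p : E1 × E2 => F p.1) :=
    (F.smooth ⊤).comp contDiff_fst
  have hg : ContDiff ℝ ((⊤ : ℕ∞) : WithTop ℕ∞) (fun p : E1 × E2 => G p.2) :=
    (G.smooth ⊤).comp contDiff_snd
  have hmul := norm_iteratedFDeriv_mul_le (𝕜 := ℝ) hf hg x
    (mod_cast le_top : (n : WithTop ℕ∞) ≤ ((⊤ : ℕ∞) : WithTop ℕ∞))
  have hxk : ‖x‖ ^ k ≤ ((1 + ‖x.1‖) * (1 + ‖x.2‖)) ^ k := by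
    refine pow_le_pow_left₀ (norm_nonneg _) ?_ k
    rw [Prod.norm_def]
    apply max_le <;> nlinarith [norm_nonneg x.1, norm_nonneg x.2]
  calc ‖x‖ ^ k * ‖iteratedFDeriv ℝ n (fun p : E1 × E2 => F p.1 * G p.2) x‖
      ≤ ((1 + ‖x.1‖) * (1 + ‖x.2‖)) ^ k *
        ∑ i ∈ Finset.range (n+1), (n.choose i : ℝ) *
          ‖iteratedFDeriv ℝ i (fun p : E1 × E2 => F p.1) x‖ *
          ‖iteratedFDeriv ℝ (n-i) (fun p : E1 × E2 => G p.2) x‖ :=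
        mul_le_mul hxk hmul (norm_nonneg _) (by positivity)
    _ ≤ ∑ i ∈ Finset.range (n+1), (n.choose i : ℝ) *
          ((1 + ‖x.1‖)^k * ‖iteratedFDeriv ℝ i (⇑F) x.1‖) *
          ((1 + ‖x.2‖)^k * ‖iteratedFDeriv ℝ (n-i) (⇑G) x.2‖) := by
        rw [Finset.mul_sum]
        refine Finset.sum_le_sum fun i _ => ?_
        have h1 := norm_iteratedFDeriv_comp_fst F i x
        have h2 := norm_iteratedFDeriv_comp_snd (E1 := E1) G (n-i) x
        rw [mul_pow]
        calc (1 + ‖x.1‖)^k * (1 + ‖x.2‖)^k * ((n.choose i : ℝ) *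
              ‖iteratedFDeriv ℝ i (fun p : E1 × E2 => F p.1) x‖ *
              ‖iteratedFDeriv ℝ (n-i) (fun p : E1 × E2 => G p.2) x‖)
            ≤ (1 + ‖x.1‖)^k * (1 + ‖x.2‖)^k * ((n.choose i : ℝ) *
              ‖iteratedFDeriv ℝ i (⇑F) x.1‖ * ‖iteratedFDeriv ℝ (n-i) (⇑G) x.2‖) := by
              refine mul_le_mul_of_nonneg_left ?_ (by positivity)
              exact mul_le_mul (mul_le_mul_of_nonneg_left h1 (by positivity)) h2
                (norm_nonneg _) (by positivity)
          _ = (n.choose i : ℝ) * ((1 + ‖x.1‖)^k * ‖iteratedFDeriv ℝ i (⇑F) x.1‖) *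
              ((1 + ‖x.2‖)^k * ‖iteratedFDeriv ℝ (n-i) (⇑G) x.2‖) := by ring
    _ ≤ ∑ i ∈ Finset.range (n+1), (n.choose i : ℝ) *
          (2^k * ((Finset.Iic (k,n)).sup (schwartzSeminormFamily ℝ E1 ℂ) F)) *
          (2^k * ((Finset.Iic (k,n)).sup (schwartzSeminormFamily ℝ E2 ℂ) G)) := by
        refine Finset.sum_le_sum fun i hi => ?_
        have hin : i ≤ n := Nat.lt_succ_iff.mp (Finset.mem_range.mp hi)
        have hF := one_add_le_sup_seminorm_apply (𝕜 := ℝ) (m := (k,n)) le_rfl hin F x.1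
        have hG := one_add_le_sup_seminorm_apply (𝕜 := ℝ) (m := (k,n)) le_rfl
          (Nat.sub_le n i) G x.2
        exact mul_le_mul (mul_le_mul_of_nonneg_left hF (by positivity)) hG
          (by positivity) (by positivity)
    _ ≤ 2^n * (2^k * ((Finset.Iic (k,n)).sup (schwartzSeminormFamily ℝ E1 ℂ) F)) *
        (2^k * ((Finset.Iic (k,n)).sup (schwartzSeminormFamily ℝ E2 ℂ) G)) := by
        rw [← Finset.sum_mul, ← Finset.sum_mul, ← Nat.cast_sum, Nat.sum_range_choose]
        push_cast
        exact le_rfl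

/-- The tensor product of two Schwartz functions. -/
def tensorS (F : 𝓢(E1,ℂ)) (G : 𝓢(E2,ℂ)) : 𝓢(E1 × E2, ℂ) where
  toFun := fun p => F p.1 * G p.2
  smooth' := tensor_smooth F G
  decay' := by
    intro k n
    exact ⟨_, fun x => tensor_bound k n F G x⟩

@[simp] lemma tensorS_apply (F : 𝓢(E1,ℂ)) (G : 𝓢(E2,ℂ)) (p : E1 × E2) :
    tensorS F G p = F p.1 * G p.2 := rfl

lemma tensorS_seminorm (k n : ℕ) (F : 𝓢(E1,ℂ)) (G : 𝓢(E2,ℂ)) :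
    SchwartzMap.seminorm ℝ k n (tensorS F G) ≤
      2^n * (2^k * ((Finset.Iic (k,n)).sup (schwartzSeminormFamily ℝ E1 ℂ) F)) *
        (2^k * ((Finset.Iic (k,n)).sup (schwartzSeminormFamily ℝ E2 ℂ) G)) :=
  seminorm_le_bound ℝ k n _ (by positivity) (fun x => tensor_bound k n F G x)

lemma tensorS_sub_split (F F₀ : 𝓢(E1,ℂ)) (G G₀ : 𝓢(E2,ℂ)) :
    tensorS F G - tensorS F₀ G₀ = tensorS (F - F₀) G + tensorS F₀ (G - G₀) := by
  ext p
  simp only [sub_apply, add_apply, tensorS_apply]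
  ring

lemma tensorS_continuous :
    Continuous (fun FG : 𝓢(E1,ℂ) × 𝓢(E2,ℂ) => tensorS FG.1 FG.2) := by
  rw [continuous_iff_continuousAt]
  rintro ⟨F₀, G₀⟩
  rw [ContinuousAt, (schwartz_withSeminorms ℝ (E1 × E2) ℂ).tendsto_nhds]
  rintro ⟨k, n⟩ ε hε
  set c : ℝ := 2^n * 2^k * 2^k with hc
  have hcpos : 0 < c := by positivity
  set SF₀ : ℝ := (Finset.Iic (k,n)).sup (schwartzSeminormFamily ℝ E1 ℂ) F₀ with hSF₀
  set SG₀ : ℝ := (Finset.Iic (k,n)).sup (schwartzSeminormFamily ℝ E2 ℂ) G₀ with hSG₀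
  have hSF₀0 : 0 ≤ SF₀ := apply_nonneg _ _
  have hSG₀0 : 0 ≤ SG₀ := apply_nonneg _ _
  set K : ℝ := c * (SG₀ + 1) + c * SF₀ + 1 with hK
  have hKpos : 0 < K := by positivity
  set δ : ℝ := min 1 (ε / (2 * K)) with hδ
  have hδpos : 0 < δ := lt_min one_pos (by positivity)
  have hFev : ∀ᶠ FG : 𝓢(E1,ℂ) × 𝓢(E2,ℂ) in nhds (F₀, G₀),
      (Finset.Iic (k,n)).sup (schwartzSeminormFamily ℝ E1 ℂ) (FG.1 - F₀) < δ := by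
    have ht : Filter.Tendsto (fun FG : 𝓢(E1,ℂ) × 𝓢(E2,ℂ) => FG.1)
        (nhds (F₀, G₀)) (nhds F₀) := continuous_fst.continuousAt
    exact ((schwartz_withSeminorms ℝ E1 ℂ).tendsto_nhds' _ F₀).mp ht (Finset.Iic (k,n)) δ hδpos
  have hGev : ∀ᶠ FG : 𝓢(E1,ℂ) × 𝓢(E2,ℂ) in nhds (F₀, G₀),
      (Finset.Iic (k,n)).sup (schwartzSeminormFamily ℝ E2 ℂ) (FG.2 - G₀) < δ := by
    have ht : Filter.Tendsto (fun FG : 𝓢(E1,ℂ) × 𝓢(E2,ℂ) => FG.2)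
        (nhds (F₀, G₀)) (nhds G₀) := continuous_snd.continuousAt
    exact ((schwartz_withSeminorms ℝ E2 ℂ).tendsto_nhds' _ G₀).mp ht (Finset.Iic (k,n)) δ hδpos
  filter_upwards [hFev, hGev] with FG hF hG
  obtain ⟨F, G⟩ := FG
  simp only at hF hG ⊢
  have hsplit := tensorS_sub_split F F₀ G G₀
  have h1 : schwartzSeminormFamily ℝ (E1 × E2) ℂ (k, n) (tensorS F G - tensorS F₀ G₀) ≤
      SchwartzMap.seminorm ℝ k n (tensorS (F - F₀) G) +
      SchwartzMap.seminorm ℝ k n (tensorS F₀ (G - G₀)) := by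
    rw [hsplit]
    exact map_add_le_add _ _ _
  have hSG : (Finset.Iic (k,n)).sup (schwartzSeminormFamily ℝ E2 ℂ) G ≤ SG₀ + δ := by
    have : G = G₀ + (G - G₀) := by abel
    calc (Finset.Iic (k,n)).sup (schwartzSeminormFamily ℝ E2 ℂ) G
        = (Finset.Iic (k,n)).sup (schwartzSeminormFamily ℝ E2 ℂ) (G₀ + (G - G₀)) := by rw [← this]
      _ ≤ SG₀ + (Finset.Iic (k,n)).sup (schwartzSeminormFamily ℝ E2 ℂ) (G - G₀) :=
          map_add_le_add _ _ _
      _ ≤ SG₀ + δ := by linarith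
  have h2 : SchwartzMap.seminorm ℝ k n (tensorS (F - F₀) G) ≤ c * (δ * (SG₀ + 1)) := by
    refine (tensorS_seminorm k n (F - F₀) G).trans ?_
    have hδ1 : δ ≤ 1 := min_le_left _ _
    calc 2^n * (2^k * (Finset.Iic (k,n)).sup (schwartzSeminormFamily ℝ E1 ℂ) (F - F₀)) *
          (2^k * (Finset.Iic (k,n)).sup (schwartzSeminormFamily ℝ E2 ℂ) G)
        ≤ 2^n * (2^k * δ) * (2^k * (SG₀ + 1)) := by
          have := apply_nonneg ((Finset.Iic (k,n)).sup (schwartzSeminormFamily ℝ E2 ℂ)) G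
          refine mul_le_mul (mul_le_mul_of_nonneg_left
            (mul_le_mul_of_nonneg_left hF.le (by positivity : (0:ℝ) ≤ 2^k))
            (by positivity : (0:ℝ) ≤ 2^n)) ?_ (by positivity) (by positivity)
          refine mul_le_mul_of_nonneg_left (hSG.trans ?_) (by positivity)
          linarith
      _ = c * (δ * (SG₀ + 1)) := by rw [hc]; ring
  have h3 : SchwartzMap.seminorm ℝ k n (tensorS F₀ (G - G₀)) ≤ c * (SF₀ * δ) := by
    refine (tensorS_seminorm k n F₀ (G - G₀)).trans ?_
    calc 2^n * (2^k * SF₀) * (2^k * (Finset.Iic (k,n)).sup (schwartzSeminormFamily ℝ E2 ℂ) (G - G₀))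
        ≤ 2^n * (2^k * SF₀) * (2^k * δ) := by
          refine mul_le_mul_of_nonneg_left ?_ (by positivity)
          exact mul_le_mul_of_nonneg_left hG.le (by positivity)
      _ = c * (SF₀ * δ) := by rw [hc]; ring
  have hδK : δ * K ≤ ε / 2 := by
    have : δ ≤ ε / (2 * K) := min_le_right _ _
    calc δ * K ≤ (ε / (2 * K)) * K := mul_le_mul_of_nonneg_right this hKpos.le
      _ = ε / 2 := by field_simp
  calc schwartzSeminormFamily ℝ (E1 × E2) ℂ (k, n) (tensorS F G - tensorS F₀ G₀)
      ≤ c * (δ * (SG₀ + 1)) + c * (SF₀ * δ) := by linarith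
    _ = δ * (c * (SG₀ + 1) + c * SF₀) := by ring
    _ ≤ δ * K := by
        refine mul_le_mul_of_nonneg_left ?_ hδpos.le
        rw [hK]; linarith
    _ ≤ ε / 2 := hδK
    _ < ε := by linarith

end Tensor

section Euclid

open scoped FourierTransform

variable (ι κ : Type*) [Fintype ι] [Fintype κ]

/-- The canonical continuous linear equivalence between a product of Euclidean spaces and the
Euclidean space over the sum type. -/
noncomputable def eProd : (EuclideanSpace ℝ ι × EuclideanSpace ℝ κ) ≃L[ℝ] EuclideanSpace ℝ (ι ⊕ κ) :=
  ((PiLp.continuousLinearEquiv 2 ℝ (fun _ : ι => ℝ)).prodCongr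
    (PiLp.continuousLinearEquiv 2 ℝ (fun _ : κ => ℝ))).trans
    (((LinearEquiv.sumArrowLequivProdArrow ι κ ℝ ℝ).symm.toContinuousLinearEquiv).trans
      (PiLp.continuousLinearEquiv 2 ℝ (fun _ : ι ⊕ κ => ℝ)).symm)

@[simp] lemma eProd_apply_inl (a : EuclideanSpace ℝ ι) (b : EuclideanSpace ℝ κ) (i : ι) :
    eProd ι κ (a, b) (Sum.inl i) = a i := rfl

@[simp] lemma eProd_apply_inr (a : EuclideanSpace ℝ ι) (b : EuclideanSpace ℝ κ) (j : κ) :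
    eProd ι κ (a, b) (Sum.inr j) = b j := rfl

lemma eProd_coe_eq : ⇑(eProd ι κ) =
    (WithLp.equiv 2 ((ι ⊕ κ) → ℝ)).symm ∘ (MeasurableEquiv.sumPiEquivProdPi (fun _ : ι ⊕ κ => ℝ)).symm ∘
      (Prod.map (WithLp.equiv 2 (ι → ℝ)) (WithLp.equiv 2 (κ → ℝ))) := by
  funext p
  ext j
  cases j <;> rfl

instance instHaarProdEuclid :
    MeasureTheory.Measure.IsAddHaarMeasure
      (volume : Measure (EuclideanSpace ℝ ι × EuclideanSpace ℝ κ)) :=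
  MeasureTheory.Measure.prod.instIsAddHaarMeasure volume volume

lemma eProd_measurePreserving : MeasurePreserving (eProd ι κ) volume volume := by
  rw [eProd_coe_eq]
  have h1 : MeasurePreserving
      (Prod.map (WithLp.equiv 2 (ι → ℝ)) (WithLp.equiv 2 (κ → ℝ)))
      volume volume := by
    rw [MeasureTheory.Measure.volume_eq_prod, MeasureTheory.Measure.volume_eq_prod]
    exact (PiLp.volume_preserving_ofLp ι).prod (PiLp.volume_preserving_ofLp κ)
  have h2 := MeasureTheory.volume_measurePreserving_sumPiEquivProdPi_symm (fun _ : ι ⊕ κ => ℝ)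
  have h3 := PiLp.volume_preserving_toLp (ι ⊕ κ)
  exact (h3.comp h2).comp h1

lemma eProd_inner (a c : EuclideanSpace ℝ ι) (b e : EuclideanSpace ℝ κ) :
    (inner ℝ (eProd ι κ (a, b)) (eProd ι κ (c, e)) : ℝ) = inner ℝ a c + inner ℝ b e := by
  simp only [PiLp.inner_apply, RCLike.inner_apply, starRingEnd_apply, star_trivial]
  rw [Fintype.sum_sum_type]
  simp

lemma eProd_norm_fst (a : EuclideanSpace ℝ ι) : ‖eProd ι κ (a, 0)‖ = ‖a‖ := by
  have h := eProd_inner ι κ a a (0 : EuclideanSpace ℝ κ) 0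
  rw [inner_zero_left, add_zero, real_inner_self_eq_norm_mul_norm,
    real_inner_self_eq_norm_mul_norm] at h
  nlinarith [norm_nonneg (eProd ι κ (a, 0)), norm_nonneg a]

/-- Restriction to the first factor, as a CLM on Schwartz space. -/
noncomputable def restCLM : 𝓢(EuclideanSpace ℝ (ι ⊕ κ), ℂ) →L[ℝ] 𝓢(EuclideanSpace ℝ ι, ℂ) :=
  compCLM ℝ (g := fun z : EuclideanSpace ℝ ι => eProd ι κ (z, 0))
    (((eProd ι κ).toContinuousLinearMap.comp
      (ContinuousLinearMap.inl ℝ _ _)).hasTemperateGrowth)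
    ⟨1, 1, fun z => by rw [eProd_norm_fst]; nlinarith [norm_nonneg (eProd ι κ (z, 0)), eProd_norm_fst ι κ z]⟩

/-- Partial integration over the second factor, as a CLM on Schwartz space. -/
noncomputable def PIraw : 𝓢(EuclideanSpace ℝ (ι ⊕ κ), ℂ) →L[ℝ] 𝓢(EuclideanSpace ℝ ι, ℂ) :=
  ((FourierTransform.fourierCLE ℝ 𝓢(EuclideanSpace ℝ ι, ℂ) (F := 𝓢(EuclideanSpace ℝ ι, ℂ))).symm.toContinuousLinearMap.comp (restCLM ι κ)).comp
    (FourierTransform.fourierCLE ℝ 𝓢(EuclideanSpace ℝ (ι ⊕ κ), ℂ) (F := 𝓢(EuclideanSpace ℝ (ι ⊕ κ), ℂ))).toContinuousLinearMap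

lemma PIraw_apply (K : 𝓢(EuclideanSpace ℝ (ι ⊕ κ), ℂ)) (z : EuclideanSpace ℝ ι) :
    PIraw ι κ K z = ∫ p : EuclideanSpace ℝ κ, K (eProd ι κ (z, p)) := by
  classical
  set Kc : 𝓢(EuclideanSpace ℝ ι × EuclideanSpace ℝ κ, ℂ) :=
    compCLMOfContinuousLinearEquiv ℝ (eProd ι κ) K with hKc
  have hKc_apply : ∀ w, Kc w = K (eProd ι κ w) := fun w => rfl
  set g : EuclideanSpace ℝ ι → ℂ := fun z => ∫ p, Kc (z, p) with hg
  have hKc_int : Integrable (⇑Kc) (volume : Measure (EuclideanSpace ℝ ι × EuclideanSpace ℝ κ)) :=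
    Kc.integrable
  -- continuity of g
  set N : ℕ := Module.finrank ℝ (EuclideanSpace ℝ κ) + 1 with hN
  set S : ℝ := 2^N * ((Finset.Iic (N, 0)).sup
      (schwartzSeminormFamily ℝ (EuclideanSpace ℝ ι × EuclideanSpace ℝ κ) ℂ) Kc) with hS
  have hS0 : 0 ≤ S := by
    have := apply_nonneg ((Finset.Iic (N, 0)).sup
      (schwartzSeminormFamily ℝ (EuclideanSpace ℝ ι × EuclideanSpace ℝ κ) ℂ)) Kc
    positivity
  have hbd : ∀ (z : EuclideanSpace ℝ ι) (p : EuclideanSpace ℝ κ),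
      ‖Kc (z, p)‖ ≤ S * ((1 + ‖p‖) ^ N)⁻¹ := by
    intro z p
    have h0 := one_add_le_sup_seminorm_apply (𝕜 := ℝ) (m := (N, 0)) le_rfl le_rfl Kc (z, p)
    rw [norm_iteratedFDeriv_zero] at h0
    have hp : (1 + ‖p‖) ^ N ≤ (1 + ‖(z, p)‖) ^ N := by
      refine pow_le_pow_left₀ (by positivity) ?_ N
      have := norm_snd_le (z, p)
      linarith
    have hppos : (0:ℝ) < (1 + ‖p‖) ^ N := by positivity
    calc ‖Kc (z, p)‖ = ((1 + ‖p‖) ^ N)⁻¹ * ((1 + ‖p‖) ^ N * ‖Kc (z, p)‖) := by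
          field_simp
      _ ≤ ((1 + ‖p‖) ^ N)⁻¹ * ((1 + ‖(z,p)‖) ^ N * ‖Kc (z, p)‖) := by
          refine mul_le_mul_of_nonneg_left ?_ (by positivity)
          exact mul_le_mul_of_nonneg_right hp (norm_nonneg _)
      _ ≤ ((1 + ‖p‖) ^ N)⁻¹ * S := by
          refine mul_le_mul_of_nonneg_left ?_ (by positivity)
          exact h0
      _ = S * ((1 + ‖p‖) ^ N)⁻¹ := by ring
  have hbound_int : Integrable (fun p : EuclideanSpace ℝ κ => S * ((1 + ‖p‖) ^ N)⁻¹) := by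
    have hfr : (Module.finrank ℝ (EuclideanSpace ℝ κ) : ℝ) < (N : ℝ) := by
      rw [hN]; exact_mod_cast Nat.lt_succ_self _
    have h1 : Integrable (fun p : EuclideanSpace ℝ κ => (1 + ‖p‖) ^ (-(N : ℝ))) :=
      integrable_one_add_norm hfr
    have h2 : (fun p : EuclideanSpace ℝ κ => S * ((1 + ‖p‖) ^ N)⁻¹) =
        (fun p : EuclideanSpace ℝ κ => S * ((1 + ‖p‖) ^ (-(N : ℝ)))) := by
      funext p
      rw [Real.rpow_neg (by positivity), Real.rpow_natCast]
    rw [h2]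
    exact h1.const_mul S
  have hg_cont : Continuous g := by
    rw [hg]
    refine continuous_of_dominated ?_ ?_ hbound_int ?_
    · intro z
      exact (Kc.continuous.comp (Continuous.prodMk_right z)).aestronglyMeasurable
    · intro z
      exact Filter.Eventually.of_forall (fun p => hbd z p)
    · exact Filter.Eventually.of_forall (fun p =>
        Kc.continuous.comp (continuous_id.prodMk continuous_const))
  have hg_int : Integrable g := by
    have h := hKc_int
    rw [MeasureTheory.Measure.volume_eq_prod] at h
    exact h.integral_prod_left
  -- Fourier transform of g
  have hfg : 𝓕 g = fun ζ => 𝓕 (⇑K) (eProd ι κ (ζ, 0)) := by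
    funext ζ
    rw [Real.fourier_eq, Real.fourier_eq]
    simp_rw [Circle.smul_def, smul_eq_mul]
    have step1 : ∫ z : EuclideanSpace ℝ ι, (𝐞 (-(inner ℝ z ζ : ℝ)) : ℂ) * g z =
        ∫ z : EuclideanSpace ℝ ι, ∫ p : EuclideanSpace ℝ κ,
          (𝐞 (-(inner ℝ z ζ : ℝ)) : ℂ) * Kc (z, p) := by
      congr 1
      funext z
      rw [hg]
      exact (integral_const_mul _ _).symm
    rw [step1]
    have hphase : Continuous fun w : EuclideanSpace ℝ ι × EuclideanSpace ℝ κ =>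
        ((𝐞 (-(inner ℝ w.1 ζ : ℝ)) : Circle) : ℂ) := by
      refine continuous_induced_dom.comp ?_
      exact Real.continuous_fourierChar.comp (continuous_fst.inner continuous_const).neg
    have hint : Integrable (fun w : EuclideanSpace ℝ ι × EuclideanSpace ℝ κ =>
        (𝐞 (-(inner ℝ w.1 ζ : ℝ)) : ℂ) * Kc w) (volume : Measure _) := by
      refine Integrable.mono' hKc_int.norm ?_ ?_
      · exact (hphase.mul Kc.continuous).aestronglyMeasurable
      · refine Filter.Eventually.of_forall (fun w => ?_)
        rw [norm_mul]
        have h1 : ‖(𝐞 (-(inner ℝ w.1 ζ : ℝ)) : ℂ)‖ = 1 := by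
          exact Circle.norm_coe _
        rw [h1, one_mul]
    have step2 : ∫ z : EuclideanSpace ℝ ι, ∫ p : EuclideanSpace ℝ κ,
          (𝐞 (-(inner ℝ z ζ : ℝ)) : ℂ) * Kc (z, p) =
        ∫ w : EuclideanSpace ℝ ι × EuclideanSpace ℝ κ,
          (𝐞 (-(inner ℝ w.1 ζ : ℝ)) : ℂ) * Kc w := by
      rw [MeasureTheory.Measure.volume_eq_prod] at hint ⊢
      exact (MeasureTheory.integral_prod _ hint).symm
    rw [step2]
    rw [← (eProd_measurePreserving ι κ).integral_comp
      (ContinuousLinearEquiv.toHomeomorph (eProd ι κ)).measurableEmbedding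
      (fun w => (𝐞 (-(inner ℝ w (eProd ι κ (ζ, 0)) : ℝ)) : ℂ) * K w)]
    congr 1
    funext w
    rw [hKc_apply, eProd_inner]
    simp
  -- inversion
  have hFg_int : Integrable (𝓕 g) := by
    have : 𝓕 g = ⇑(restCLM ι κ (𝓕 K)) := by
      rw [hfg]
      rfl
    rw [this]
    exact SchwartzMap.integrable _
  have hinv := Continuous.fourierInv_fourier_eq hg_cont hg_int hFg_int
  have hPI : PIraw ι κ K z = 𝓕⁻ (𝓕 g) z := by
    have h1 : ⇑(restCLM ι κ (𝓕 K)) = 𝓕 g := by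
      rw [hfg]; rfl
    calc PIraw ι κ K z = ((FourierTransform.fourierCLE ℝ 𝓢(EuclideanSpace ℝ ι, ℂ) (F := 𝓢(EuclideanSpace ℝ ι, ℂ))).symm (restCLM ι κ (𝓕 K))) z := rfl
      _ = 𝓕⁻ (⇑(restCLM ι κ (𝓕 K))) z := by
          rw [FourierTransform.fourierCLE_symm_apply, SchwartzMap.fourierInv_coe]
      _ = 𝓕⁻ (𝓕 g) z := by rw [h1]
  rw [hPI, hinv]
  rw [hg]
  simp only [hKc_apply]

end Euclid

section Main

variable (d : ℕ)

noncomputable def twPsi : (Ed d × Ed d) ≃L[ℝ] EuclideanSpace ℝ (Fin d ⊕ Fin d) :=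
  eProd (Fin d) (Fin d)

noncomputable def twPhi : ((Ed d × Ed d) × (Ed d × Ed d)) ≃L[ℝ]
    EuclideanSpace ℝ ((Fin d ⊕ Fin d) ⊕ (Fin d ⊕ Fin d)) :=
  ((twPsi d).prodCongr (twPsi d)).trans (eProd (Fin d ⊕ Fin d) (Fin d ⊕ Fin d))

noncomputable def twShear : ((Ed d × Ed d) × (Ed d × Ed d)) ≃L[ℝ]
    ((Ed d × Ed d) × (Ed d × Ed d)) :=
  ContinuousLinearEquiv.equivOfInverse
    ((ContinuousLinearMap.fst ℝ (Ed d × Ed d) (Ed d × Ed d) -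
      ContinuousLinearMap.snd ℝ (Ed d × Ed d) (Ed d × Ed d)).prod
      (ContinuousLinearMap.snd ℝ (Ed d × Ed d) (Ed d × Ed d)))
    ((ContinuousLinearMap.fst ℝ (Ed d × Ed d) (Ed d × Ed d) +
      ContinuousLinearMap.snd ℝ (Ed d × Ed d) (Ed d × Ed d)).prod
      (ContinuousLinearMap.snd ℝ (Ed d × Ed d) (Ed d × Ed d)))
    (fun x => by
      simp only [ContinuousLinearMap.prod_apply, ContinuousLinearMap.coe_sub',
        ContinuousLinearMap.coe_fst', ContinuousLinearMap.coe_snd', Pi.sub_apply,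
        ContinuousLinearMap.add_apply]
      exact Prod.ext (sub_add_cancel _ _) rfl)
    (fun x => by
      simp only [ContinuousLinearMap.prod_apply, ContinuousLinearMap.coe_sub',
        ContinuousLinearMap.coe_fst', ContinuousLinearMap.coe_snd', Pi.sub_apply,
        ContinuousLinearMap.add_apply]
      exact Prod.ext (add_sub_cancel_right _ _) rfl)

@[simp] lemma twShear_apply (w : (Ed d × Ed d) × (Ed d × Ed d)) :
    twShear d w = (w.1 - w.2, w.2) := rfl

/-- The bilinear form giving the twisted-convolution phase. -/
noncomputable def twB : ((Ed d × Ed d) × (Ed d × Ed d)) →L[ℝ]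
    ((Ed d × Ed d) × (Ed d × Ed d)) →L[ℝ] ℝ :=
  ((ContinuousLinearMap.compL ℝ ((Ed d × Ed d) × (Ed d × Ed d)) (Ed d) ℝ).flip
    ((ContinuousLinearMap.snd ℝ (Ed d) (Ed d)).comp
      (ContinuousLinearMap.snd ℝ (Ed d × Ed d) (Ed d × Ed d)))).comp
    ((innerSL ℝ).comp
      ((ContinuousLinearMap.fst ℝ (Ed d) (Ed d)).comp
        (ContinuousLinearMap.fst ℝ (Ed d × Ed d) (Ed d × Ed d)) -
       (ContinuousLinearMap.fst ℝ (Ed d) (Ed d)).comp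
        (ContinuousLinearMap.snd ℝ (Ed d × Ed d) (Ed d × Ed d))))

/-- The scaled multiplication bilinear map. -/
noncomputable def twMul : ℂ →L[ℝ] ℂ →L[ℝ] ℂ :=
  (((2 * π) ^ (-(d : ℝ) / 2) : ℝ)) • (ContinuousLinearMap.mul ℝ ℂ)

/-- The full post-tensor chain. -/
noncomputable def twChain : 𝓢((Ed d × Ed d) × (Ed d × Ed d), ℂ) →L[ℝ] 𝓢(Ed d × Ed d, ℂ) :=
  (compCLMOfContinuousLinearEquiv ℝ (twPsi d)).comp
    ((PIraw (Fin d ⊕ Fin d) (Fin d ⊕ Fin d)).comp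
      ((compCLMOfContinuousLinearEquiv ℝ (twPhi d).symm).comp
        ((bilinLeftCLM (twMul d) (tc_hasTemperateGrowth (twB d))).comp
          (compCLMOfContinuousLinearEquiv ℝ (twShear d)))))

lemma twChain_apply (H : 𝓢((Ed d × Ed d) × (Ed d × Ed d), ℂ)) (z : Ed d × Ed d) :
    twChain d H z = ∫ p : Ed d × Ed d,
      (((2 * π) ^ (-(d : ℝ) / 2) : ℝ) : ℂ) *
        (H (z - p, p) * Complex.exp (-(Complex.I * ((inner ℝ (z.1 - p.1) p.2 : ℝ) : ℂ)))) := by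
  have h1 : twChain d H z =
      PIraw (Fin d ⊕ Fin d) (Fin d ⊕ Fin d)
        ((compCLMOfContinuousLinearEquiv ℝ (twPhi d).symm)
          ((bilinLeftCLM (twMul d) (tc_hasTemperateGrowth (twB d)))
            ((compCLMOfContinuousLinearEquiv ℝ (twShear d)) H))) (twPsi d z) := rfl
  rw [h1, PIraw_apply]
  rw [← (eProd_measurePreserving (Fin d) (Fin d)).integral_comp
    (ContinuousLinearEquiv.toHomeomorph (eProd (Fin d) (Fin d))).measurableEmbedding]
  congr 1

end Main

end TwistedAux

/-- The twisted convolution restricts to a continuous (bilinear) map from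
S(ℝ^{2d}) × S(ℝ^{2d}) to S(ℝ^{2d}). -/
theorem stmt7 (d : ℕ) :
    ∃ T : SchwartzMap (Ed d × Ed d) ℂ × SchwartzMap (Ed d × Ed d) ℂ →
        SchwartzMap (Ed d × Ed d) ℂ,
      Continuous T ∧
      ∀ (F G : SchwartzMap (Ed d × Ed d) ℂ) (x ξ : Ed d),
        T (F, G) (x, ξ) =
          (((2 * π) ^ (-(d : ℝ) / 2) : ℝ) : ℂ) *
            ∫ p : Ed d × Ed d,
              F (x - p.1, ξ - p.2) * G p *
                Complex.exp (-(Complex.I * (⟪x - p.1, p.2⟫ : ℝ))) := by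
  refine ⟨fun FG => twChain d (tensorS FG.1 FG.2),
    (twChain d).continuous.comp tensorS_continuous, ?_⟩
  intro F G x ξ
  show twChain d (tensorS F G) (x, ξ) = _
  rw [twChain_apply, ← integral_const_mul]
  congr 1

end
end

section
/- Let r, ρ ∈ [0,1], ω₀ ∈ P_{r,ρ}(ℝ^{2d}) and a ∈ SG^{(ω₀)}_{r,ρ}(ℝ^{2d}). Then the following are equivalent: (i) a(x,ξ) ≠ 0 for all (x,ξ) ∈ ℝ^{2d} and the function 1/a belongs to SG^{(1/ω₀)}_{r,ρ}(ℝ^{2d}); (ii) there exists a constant c > 0 such that c ω₀(x,ξ) ≤ |a(x,ξ)| for all (x,ξ) ∈ ℝ^{2d}. -/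
open MeasureTheory Real Complex
open scoped RealInnerProductSpace

noncomputable section

lemma jap_pos {d : ℕ} (x : Ed d) : 0 < jap x := by
  unfold jap; positivity

lemma jap_rpow_succ {d : ℕ} (t : ℝ) (x : Ed d) (m : ℕ) :
    jap x ^ (-(t * ((m + 1 : ℕ) : ℝ))) = jap x ^ (-(t * (m : ℝ))) * jap x ^ (-t) := by
  rw [← Real.rpow_add (jap_pos x)]
  congr 1
  push_cast
  ring

lemma contDiff_dD {d : ℕ} {f : Ed d × Ed d → ℂ} (hf : ContDiff ℝ (⊤ : ℕ∞) f) (v : Ed d × Ed d) :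
    ContDiff ℝ (⊤ : ℕ∞) (fun z => fderiv ℝ f z v) :=
  (ContinuousLinearMap.apply ℝ ℂ v).contDiff.comp (hf.fderiv_right (by simp))

lemma iteratedFDeriv_peel {d : ℕ} {f : Ed d × Ed d → ℂ} (hf : ContDiff ℝ (⊤ : ℕ∞) f) (N : ℕ)
    (vs : Fin (N + 1) → Ed d × Ed d) (z : Ed d × Ed d) :
    iteratedFDeriv ℝ (N + 1) f z vs =
      iteratedFDeriv ℝ N (fun y => fderiv ℝ f y (vs (Fin.last N))) z (Fin.init vs) := by
  rw [iteratedFDeriv_succ_apply_right]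
  have h1 : iteratedFDeriv ℝ N (fun y => fderiv ℝ f y (vs (Fin.last N))) z
      = (ContinuousLinearMap.apply ℝ ℂ (vs (Fin.last N))).compContinuousMultilinearMap
          (iteratedFDeriv ℝ N (fderiv ℝ f) z) :=
    (ContinuousLinearMap.apply ℝ ℂ (vs (Fin.last N))).iteratedFDeriv_comp_left
      (hf.fderiv_right (m := (⊤ : ℕ∞)) (by simp)).contDiffAt (by exact_mod_cast le_top)
  rw [h1]
  rfl

lemma dirs_last_right {d : ℕ} (n m : ℕ) (i : Fin n → Fin d) (j : Fin (m + 1) → Fin d) :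
    dirs d n (m + 1) i j (Fin.last (n + m)) = (0, eVec d (j (Fin.last m))) := by
  have h : (Fin.last (n + m) : Fin (n + (m + 1))) = Fin.natAdd n (Fin.last m) := by
    ext; simp
  rw [h]
  simp only [dirs, Fin.addCases_right]

lemma dirs_init_right {d : ℕ} (n m : ℕ) (i : Fin n → Fin d) (j : Fin (m + 1) → Fin d) :
    Fin.init (dirs d n (m + 1) i j) = dirs d n m i (Fin.init j) := by
  funext k
  refine Fin.addCases (motive := fun k =>
      Fin.init (dirs d n (m + 1) i j) k = dirs d n m i (Fin.init j) k) ?_ ?_ k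
  · intro p
    have h : Fin.castSucc (Fin.castAdd m p) = (Fin.castAdd (m + 1) p : Fin (n + (m + 1))) := rfl
    simp only [Fin.init, h, dirs, Fin.addCases_left]
  · intro p
    have h : Fin.castSucc (Fin.natAdd n p) = Fin.natAdd n (Fin.castSucc p) := by
      ext; simp
    simp only [Fin.init, h, dirs, Fin.addCases_right]

lemma dirs_last_left {d : ℕ} (n : ℕ) (i : Fin (n + 1) → Fin d) (j : Fin 0 → Fin d) :
    dirs d (n + 1) 0 i j (Fin.last (n + 0)) = (eVec d (i (Fin.last n)), 0) := by
  have h : (Fin.last (n + 0) : Fin ((n + 1) + 0)) = Fin.castAdd 0 (Fin.last n) := by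
    ext; simp
  rw [h]
  simp only [dirs, Fin.addCases_left]

lemma dirs_init_left {d : ℕ} (n : ℕ) (i : Fin (n + 1) → Fin d) (j : Fin 0 → Fin d) :
    Fin.init (dirs d (n + 1) 0 i j) = dirs d n 0 (Fin.init i) j := by
  funext k
  have h3 : k = Fin.castAdd 0 (Fin.cast (Nat.add_zero n) k) := rfl
  have h2 : (Fin.castSucc k : Fin ((n + 1) + 0))
      = Fin.castAdd 0 (Fin.castSucc (Fin.cast (Nat.add_zero n) k)) := rfl
  calc Fin.init (dirs d (n + 1) 0 i j) k
      = dirs d (n + 1) 0 i j (Fin.castAdd 0 (Fin.castSucc (Fin.cast (Nat.add_zero n) k))) := rfl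
    _ = (eVec d (i (Fin.castSucc (Fin.cast (Nat.add_zero n) k))), 0) := by
        show Fin.addCases (motive := fun _ => Ed d × Ed d) (fun p => (eVec d (i p), 0))
          (fun p => (0, eVec d (j p))) (Fin.castAdd 0 (Fin.castSucc (Fin.cast (Nat.add_zero n) k)))
            = _
        rw [Fin.addCases_left]
    _ = dirs d n 0 (Fin.init i) j k := by
        conv_rhs => rw [h3]
        show _ = Fin.addCases (motive := fun _ => Ed d × Ed d) (fun p => (eVec d (Fin.init i p), 0))
          (fun p => (0, eVec d (j p))) (Fin.castAdd 0 (Fin.cast (Nat.add_zero n) k))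
        rw [Fin.addCases_left]
        rfl

lemma mixedPartial_succ_right {d : ℕ} {f : Ed d × Ed d → ℂ} (hf : ContDiff ℝ (⊤ : ℕ∞) f)
    (n m : ℕ) (i : Fin n → Fin d) (j : Fin (m + 1) → Fin d) (z : Ed d × Ed d) :
    mixedPartial n (m + 1) i j f z =
      mixedPartial n m i (Fin.init j)
        (fun y => fderiv ℝ f y (0, eVec d (j (Fin.last m)))) z := by
  unfold mixedPartial
  have h := iteratedFDeriv_peel hf (n + m) (dirs d n (m + 1) i j) z
  rw [dirs_last_right, dirs_init_right] at h
  exact h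

lemma mixedPartial_succ_left {d : ℕ} {f : Ed d × Ed d → ℂ} (hf : ContDiff ℝ (⊤ : ℕ∞) f)
    (n : ℕ) (i : Fin (n + 1) → Fin d) (j : Fin 0 → Fin d) (z : Ed d × Ed d) :
    mixedPartial (n + 1) 0 i j f z =
      mixedPartial n 0 (Fin.init i) j
        (fun y => fderiv ℝ f y (eVec d (i (Fin.last n)), 0)) z := by
  unfold mixedPartial
  have h := iteratedFDeriv_peel hf (n + 0) (dirs d (n + 1) 0 i j) z
  rw [dirs_last_left, dirs_init_left] at h
  exact h

lemma mixedPartial_zero {d : ℕ} (i : Fin 0 → Fin d) (j : Fin 0 → Fin d)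
    (f : Ed d × Ed d → ℂ) (z : Ed d × Ed d) :
    mixedPartial 0 0 i j f z = f z := by
  unfold mixedPartial
  exact iteratedFDeriv_zero_apply _

lemma mixedPartial_add {d : ℕ} {f g : Ed d × Ed d → ℂ} (hf : ContDiff ℝ (⊤ : ℕ∞) f)
    (hg : ContDiff ℝ (⊤ : ℕ∞) g) (n m : ℕ) (i : Fin n → Fin d) (j : Fin m → Fin d) (z : Ed d × Ed d) :
    mixedPartial n m i j (fun z => f z + g z) z
      = mixedPartial n m i j f z + mixedPartial n m i j g z := by
  unfold mixedPartial
  rw [fun_iteratedFDeriv_add_apply (hf.of_le (by exact_mod_cast le_top)).contDiffAt (hg.of_le (by exact_mod_cast le_top)).contDiffAt]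
  rfl

lemma mixedPartial_neg {d : ℕ} {g : Ed d × Ed d → ℂ}
    (n m : ℕ) (i : Fin n → Fin d) (j : Fin m → Fin d) (z : Ed d × Ed d) :
    mixedPartial n m i j (fun z => -(g z)) z = - mixedPartial n m i j g z := by
  unfold mixedPartial
  rw [show (fun z => -(g z)) = -g from rfl, iteratedFDeriv_neg_apply]
  rfl
lemma dD_mul {d : ℕ} {b₁ b₂ : Ed d × Ed d → ℂ} (hb₁ : ContDiff ℝ (⊤ : ℕ∞) b₁)
    (hb₂ : ContDiff ℝ (⊤ : ℕ∞) b₂) (v : Ed d × Ed d) :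
    (fun z => fderiv ℝ (fun w => b₁ w * b₂ w) z v)
      = fun z => fderiv ℝ b₁ z v * b₂ z + b₁ z * fderiv ℝ b₂ z v := by
  funext z
  rw [fderiv_fun_mul (hb₁.differentiable (by simp) z) (hb₂.differentiable (by simp) z)]
  simp [ContinuousLinearMap.add_apply, ContinuousLinearMap.smul_apply]
  ring

lemma dD_inv {d : ℕ} {a : Ed d × Ed d → ℂ} (hsm : ContDiff ℝ (⊤ : ℕ∞) a) (h0 : ∀ z, a z ≠ 0)
    (v : Ed d × Ed d) :
    (fun z => fderiv ℝ (fun w => (a w)⁻¹) z v)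
      = fun z => -((a z)⁻¹ * ((a z)⁻¹ * fderiv ℝ a z v)) := by
  funext z
  have h : HasFDerivAt (fun w => (a w)⁻¹)
      ((-ContinuousLinearMap.mulLeftRight ℝ ℂ (a z)⁻¹ (a z)⁻¹).comp (fderiv ℝ a z)) z :=
    (hasFDerivAt_inv' (h0 z)).comp z ((hsm.differentiable (by simp) z).hasFDerivAt)
  rw [h.fderiv]
  simp [ContinuousLinearMap.comp_apply, ContinuousLinearMap.neg_apply,
    ContinuousLinearMap.mulLeftRight_apply]
  ring
lemma shift_right_bound {d : ℕ} (r ρ : ℝ) {b : Ed d × Ed d → ℂ} {w : Ed d × Ed d → ℝ}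
    (hb : ContDiff ℝ (⊤ : ℕ∞) b) (j₀ : Fin d)
    (n m : ℕ) (i : Fin n → Fin d) (j : Fin m → Fin d)
    (H : ∃ C, ∀ x ξ, ‖mixedPartial n (m + 1) i (Fin.snoc j j₀) b (x, ξ)‖ ≤
      C * jap x ^ (-(r * (n : ℝ))) * jap ξ ^ (-(ρ * ((m + 1 : ℕ) : ℝ))) * w (x, ξ)) :
    ∃ C, ∀ x ξ, ‖mixedPartial n m i j (fun y => fderiv ℝ b y (0, eVec d j₀)) (x, ξ)‖ ≤
      C * jap x ^ (-(r * (n : ℝ))) * jap ξ ^ (-(ρ * (m : ℝ))) * (jap ξ ^ (-ρ) * w (x, ξ)) := by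
  obtain ⟨C, hC⟩ := H
  refine ⟨C, fun x ξ => ?_⟩
  have e := mixedPartial_succ_right hb n m i (Fin.snoc j j₀) (x, ξ)
  rw [Fin.init_snoc, Fin.snoc_last] at e
  rw [← e]
  calc ‖mixedPartial n (m + 1) i (Fin.snoc j j₀) b (x, ξ)‖ ≤ _ := hC x ξ
  _ = C * jap x ^ (-(r * (n : ℝ))) * jap ξ ^ (-(ρ * (m : ℝ))) * (jap ξ ^ (-ρ) * w (x, ξ)) := by
      rw [jap_rpow_succ]; ring

lemma shift_left_bound {d : ℕ} (r ρ : ℝ) {b : Ed d × Ed d → ℂ} {w : Ed d × Ed d → ℝ}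
    (hb : ContDiff ℝ (⊤ : ℕ∞) b) (i₀ : Fin d)
    (n : ℕ) (i : Fin n → Fin d) (j : Fin 0 → Fin d)
    (H : ∃ C, ∀ x ξ, ‖mixedPartial (n + 1) 0 (Fin.snoc i i₀) j b (x, ξ)‖ ≤
      C * jap x ^ (-(r * ((n + 1 : ℕ) : ℝ))) * jap ξ ^ (-(ρ * ((0 : ℕ) : ℝ))) * w (x, ξ)) :
    ∃ C, ∀ x ξ, ‖mixedPartial n 0 i j (fun y => fderiv ℝ b y (eVec d i₀, 0)) (x, ξ)‖ ≤
      C * jap x ^ (-(r * (n : ℝ))) * jap ξ ^ (-(ρ * ((0 : ℕ) : ℝ))) * (jap x ^ (-r) * w (x, ξ)) := by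
  obtain ⟨C, hC⟩ := H
  refine ⟨C, fun x ξ => ?_⟩
  have e := mixedPartial_succ_left hb n (Fin.snoc i i₀) j (x, ξ)
  rw [Fin.init_snoc, Fin.snoc_last] at e
  rw [← e]
  calc ‖mixedPartial (n + 1) 0 (Fin.snoc i i₀) j b (x, ξ)‖ ≤ _ := hC x ξ
  _ = C * jap x ^ (-(r * (n : ℝ))) * jap ξ ^ (-(ρ * ((0 : ℕ) : ℝ))) * (jap x ^ (-r) * w (x, ξ)) := by
      rw [jap_rpow_succ]; ring
lemma mult_bound {d : ℕ} (r ρ : ℝ) :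
    ∀ N : ℕ, ∀ (w₁ w₂ : Ed d × Ed d → ℝ) (b₁ b₂ : Ed d × Ed d → ℂ),
      ContDiff ℝ (⊤ : ℕ∞) b₁ → ContDiff ℝ (⊤ : ℕ∞) b₂ →
      ∀ n m : ℕ, n + m ≤ N →
      (∀ (n' m' : ℕ) (i' : Fin n' → Fin d) (j' : Fin m' → Fin d), n' ≤ n → m' ≤ m →
        ∃ C, ∀ x ξ, ‖mixedPartial n' m' i' j' b₁ (x, ξ)‖ ≤
          C * jap x ^ (-(r * (n' : ℝ))) * jap ξ ^ (-(ρ * (m' : ℝ))) * w₁ (x, ξ)) →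
      (∀ (n' m' : ℕ) (i' : Fin n' → Fin d) (j' : Fin m' → Fin d), n' ≤ n → m' ≤ m →
        ∃ C, ∀ x ξ, ‖mixedPartial n' m' i' j' b₂ (x, ξ)‖ ≤
          C * jap x ^ (-(r * (n' : ℝ))) * jap ξ ^ (-(ρ * (m' : ℝ))) * w₂ (x, ξ)) →
      ∀ (i : Fin n → Fin d) (j : Fin m → Fin d),
        ∃ C, ∀ x ξ, ‖mixedPartial n m i j (fun z => b₁ z * b₂ z) (x, ξ)‖ ≤
          C * jap x ^ (-(r * (n : ℝ))) * jap ξ ^ (-(ρ * (m : ℝ))) * (w₁ (x, ξ) * w₂ (x, ξ)) := by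
  intro N
  induction N with
  | zero =>
    intro w₁ w₂ b₁ b₂ hb₁ hb₂ n m hnm H₁ H₂ i j
    obtain rfl : n = 0 := by omega
    obtain rfl : m = 0 := by omega
    obtain ⟨C₁, hC₁⟩ := H₁ 0 0 i j le_rfl le_rfl
    obtain ⟨C₂, hC₂⟩ := H₂ 0 0 i j le_rfl le_rfl
    refine ⟨C₁ * C₂, fun x ξ => ?_⟩
    have h1 := hC₁ x ξ
    have h2 := hC₂ x ξ
    simp only [Nat.cast_zero, mul_zero, neg_zero, Real.rpow_zero, mul_one,
      mixedPartial_zero] at h1 h2 ⊢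
    rw [norm_mul]
    calc ‖b₁ (x, ξ)‖ * ‖b₂ (x, ξ)‖ ≤ (C₁ * w₁ (x, ξ)) * (C₂ * w₂ (x, ξ)) :=
      mul_le_mul h1 h2 (norm_nonneg _) ((norm_nonneg _).trans h1)
    _ = C₁ * C₂ * (w₁ (x, ξ) * w₂ (x, ξ)) := by ring
  | succ N IH =>
    intro w₁ w₂ b₁ b₂ hb₁ hb₂ n m hnm H₁ H₂ i j
    by_cases hle : n + m ≤ N
    · exact IH w₁ w₂ b₁ b₂ hb₁ hb₂ n m hle H₁ H₂ i j
    have hex : n + m = N + 1 := by omega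
    cases m with
    | succ m' =>
      -- peel a ξ-derivative
      set j₀ := j (Fin.last m') with hj₀
      set v : Ed d × Ed d := (0, eVec d j₀) with hv
      have hd₁ : ContDiff ℝ (⊤ : ℕ∞) (fun z => fderiv ℝ b₁ z v) := contDiff_dD hb₁ v
      have hd₂ : ContDiff ℝ (⊤ : ℕ∞) (fun z => fderiv ℝ b₂ z v) := contDiff_dD hb₂ v
      have H₁' : ∀ (n' m'' : ℕ) (i' : Fin n' → Fin d) (j' : Fin m'' → Fin d),
          n' ≤ n → m'' ≤ m' →
          ∃ C, ∀ x ξ, ‖mixedPartial n' m'' i' j' (fun z => fderiv ℝ b₁ z v) (x, ξ)‖ ≤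
            C * jap x ^ (-(r * (n' : ℝ))) * jap ξ ^ (-(ρ * (m'' : ℝ)))
              * ((fun z => jap z.2 ^ (-ρ) * w₁ z) (x, ξ)) := fun n' m'' i' j' h1 h2 =>
        shift_right_bound r ρ hb₁ j₀ n' m'' i' j'
          (H₁ n' (m'' + 1) i' (Fin.snoc j' j₀) h1 (by omega))
      have H₂' : ∀ (n' m'' : ℕ) (i' : Fin n' → Fin d) (j' : Fin m'' → Fin d),
          n' ≤ n → m'' ≤ m' →
          ∃ C, ∀ x ξ, ‖mixedPartial n' m'' i' j' (fun z => fderiv ℝ b₂ z v) (x, ξ)‖ ≤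
            C * jap x ^ (-(r * (n' : ℝ))) * jap ξ ^ (-(ρ * (m'' : ℝ)))
              * ((fun z => jap z.2 ^ (-ρ) * w₂ z) (x, ξ)) := fun n' m'' i' j' h1 h2 =>
        shift_right_bound r ρ hb₂ j₀ n' m'' i' j'
          (H₂ n' (m'' + 1) i' (Fin.snoc j' j₀) h1 (by omega))
      have H₁r : ∀ (n' m'' : ℕ) (i' : Fin n' → Fin d) (j' : Fin m'' → Fin d),
          n' ≤ n → m'' ≤ m' →
          ∃ C, ∀ x ξ, ‖mixedPartial n' m'' i' j' b₁ (x, ξ)‖ ≤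
            C * jap x ^ (-(r * (n' : ℝ))) * jap ξ ^ (-(ρ * (m'' : ℝ))) * w₁ (x, ξ) :=
        fun n' m'' i' j' h1 h2 => H₁ n' m'' i' j' h1 (by omega)
      have H₂r : ∀ (n' m'' : ℕ) (i' : Fin n' → Fin d) (j' : Fin m'' → Fin d),
          n' ≤ n → m'' ≤ m' →
          ∃ C, ∀ x ξ, ‖mixedPartial n' m'' i' j' b₂ (x, ξ)‖ ≤
            C * jap x ^ (-(r * (n' : ℝ))) * jap ξ ^ (-(ρ * (m'' : ℝ))) * w₂ (x, ξ) :=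
        fun n' m'' i' j' h1 h2 => H₂ n' m'' i' j' h1 (by omega)
      obtain ⟨CA, hCA⟩ := IH (fun z => jap z.2 ^ (-ρ) * w₁ z) w₂
        (fun z => fderiv ℝ b₁ z v) b₂ hd₁ hb₂ n m' (by omega) H₁' H₂r i (Fin.init j)
      obtain ⟨CB, hCB⟩ := IH w₁ (fun z => jap z.2 ^ (-ρ) * w₂ z)
        b₁ (fun z => fderiv ℝ b₂ z v) hb₁ hd₂ n m' (by omega) H₁r H₂' i (Fin.init j)
      refine ⟨CA + CB, fun x ξ => ?_⟩
      have e1 := mixedPartial_succ_right (hb₁.mul hb₂) n m' i j (x, ξ)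
      have e2 : (fun y => fderiv ℝ (fun z => b₁ z * b₂ z) y (0, eVec d (j (Fin.last m'))))
          = fun y => (fun z => fderiv ℝ b₁ z v) y * b₂ y + b₁ y * (fun z => fderiv ℝ b₂ z v) y := by
        rw [dD_mul hb₁ hb₂]
      rw [e1, e2, mixedPartial_add (hd₁.mul hb₂) (hb₁.mul hd₂)]
      calc ‖mixedPartial n m' i (Fin.init j) (fun y => (fun z => fderiv ℝ b₁ z v) y * b₂ y) (x, ξ)
            + mixedPartial n m' i (Fin.init j) (fun y => b₁ y * (fun z => fderiv ℝ b₂ z v) y) (x, ξ)‖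
          ≤ ‖mixedPartial n m' i (Fin.init j) (fun y => (fun z => fderiv ℝ b₁ z v) y * b₂ y) (x, ξ)‖
            + ‖mixedPartial n m' i (Fin.init j) (fun y => b₁ y * (fun z => fderiv ℝ b₂ z v) y) (x, ξ)‖ :=
          norm_add_le _ _
        _ ≤ CA * jap x ^ (-(r * (n : ℝ))) * jap ξ ^ (-(ρ * (m' : ℝ)))
              * ((jap ξ ^ (-ρ) * w₁ (x, ξ)) * w₂ (x, ξ))
            + CB * jap x ^ (-(r * (n : ℝ))) * jap ξ ^ (-(ρ * (m' : ℝ)))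
              * (w₁ (x, ξ) * (jap ξ ^ (-ρ) * w₂ (x, ξ))) := add_le_add (hCA x ξ) (hCB x ξ)
        _ = (CA + CB) * jap x ^ (-(r * (n : ℝ))) * jap ξ ^ (-(ρ * ((m' + 1 : ℕ) : ℝ)))
              * (w₁ (x, ξ) * w₂ (x, ξ)) := by
            rw [jap_rpow_succ]; ring
    | zero =>
      cases n with
      | zero => omega
      | succ n' =>
        set i₀ := i (Fin.last n') with hi₀
        set v : Ed d × Ed d := (eVec d i₀, 0) with hv
        have hd₁ : ContDiff ℝ (⊤ : ℕ∞) (fun z => fderiv ℝ b₁ z v) := contDiff_dD hb₁ v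
        have hd₂ : ContDiff ℝ (⊤ : ℕ∞) (fun z => fderiv ℝ b₂ z v) := contDiff_dD hb₂ v
        have H₁' : ∀ (n'' m'' : ℕ) (i' : Fin n'' → Fin d) (j' : Fin m'' → Fin d),
            n'' ≤ n' → m'' ≤ 0 →
            ∃ C, ∀ x ξ, ‖mixedPartial n'' m'' i' j' (fun z => fderiv ℝ b₁ z v) (x, ξ)‖ ≤
              C * jap x ^ (-(r * (n'' : ℝ))) * jap ξ ^ (-(ρ * (m'' : ℝ)))
                * ((fun z => jap z.1 ^ (-r) * w₁ z) (x, ξ)) := by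
          intro n'' m'' i' j' h1 h2
          obtain rfl : m'' = 0 := by omega
          exact shift_left_bound r ρ hb₁ i₀ n'' i' j'
            (H₁ (n'' + 1) 0 (Fin.snoc i' i₀) j' (by omega) le_rfl)
        have H₂' : ∀ (n'' m'' : ℕ) (i' : Fin n'' → Fin d) (j' : Fin m'' → Fin d),
            n'' ≤ n' → m'' ≤ 0 →
            ∃ C, ∀ x ξ, ‖mixedPartial n'' m'' i' j' (fun z => fderiv ℝ b₂ z v) (x, ξ)‖ ≤
              C * jap x ^ (-(r * (n'' : ℝ))) * jap ξ ^ (-(ρ * (m'' : ℝ)))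
                * ((fun z => jap z.1 ^ (-r) * w₂ z) (x, ξ)) := by
          intro n'' m'' i' j' h1 h2
          obtain rfl : m'' = 0 := by omega
          exact shift_left_bound r ρ hb₂ i₀ n'' i' j'
            (H₂ (n'' + 1) 0 (Fin.snoc i' i₀) j' (by omega) le_rfl)
        have H₁r : ∀ (n'' m'' : ℕ) (i' : Fin n'' → Fin d) (j' : Fin m'' → Fin d),
            n'' ≤ n' → m'' ≤ 0 →
            ∃ C, ∀ x ξ, ‖mixedPartial n'' m'' i' j' b₁ (x, ξ)‖ ≤
              C * jap x ^ (-(r * (n'' : ℝ))) * jap ξ ^ (-(ρ * (m'' : ℝ))) * w₁ (x, ξ) :=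
          fun n'' m'' i' j' h1 h2 => H₁ n'' m'' i' j' (by omega) h2
        have H₂r : ∀ (n'' m'' : ℕ) (i' : Fin n'' → Fin d) (j' : Fin m'' → Fin d),
            n'' ≤ n' → m'' ≤ 0 →
            ∃ C, ∀ x ξ, ‖mixedPartial n'' m'' i' j' b₂ (x, ξ)‖ ≤
              C * jap x ^ (-(r * (n'' : ℝ))) * jap ξ ^ (-(ρ * (m'' : ℝ))) * w₂ (x, ξ) :=
          fun n'' m'' i' j' h1 h2 => H₂ n'' m'' i' j' (by omega) h2
        obtain ⟨CA, hCA⟩ := IH (fun z => jap z.1 ^ (-r) * w₁ z) w₂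
          (fun z => fderiv ℝ b₁ z v) b₂ hd₁ hb₂ n' 0 (by omega) H₁' H₂r (Fin.init i) j
        obtain ⟨CB, hCB⟩ := IH w₁ (fun z => jap z.1 ^ (-r) * w₂ z)
          b₁ (fun z => fderiv ℝ b₂ z v) hb₁ hd₂ n' 0 (by omega) H₁r H₂' (Fin.init i) j
        refine ⟨CA + CB, fun x ξ => ?_⟩
        have e1 := mixedPartial_succ_left (hb₁.mul hb₂) n' i j (x, ξ)
        have e2 : (fun y => fderiv ℝ (fun z => b₁ z * b₂ z) y (eVec d (i (Fin.last n')), 0))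
            = fun y => (fun z => fderiv ℝ b₁ z v) y * b₂ y + b₁ y * (fun z => fderiv ℝ b₂ z v) y := by
          rw [dD_mul hb₁ hb₂]
        rw [e1, e2, mixedPartial_add (hd₁.mul hb₂) (hb₁.mul hd₂)]
        calc ‖mixedPartial n' 0 (Fin.init i) j (fun y => (fun z => fderiv ℝ b₁ z v) y * b₂ y) (x, ξ)
              + mixedPartial n' 0 (Fin.init i) j (fun y => b₁ y * (fun z => fderiv ℝ b₂ z v) y) (x, ξ)‖
            ≤ ‖mixedPartial n' 0 (Fin.init i) j (fun y => (fun z => fderiv ℝ b₁ z v) y * b₂ y) (x, ξ)‖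
              + ‖mixedPartial n' 0 (Fin.init i) j (fun y => b₁ y * (fun z => fderiv ℝ b₂ z v) y) (x, ξ)‖ :=
            norm_add_le _ _
          _ ≤ CA * jap x ^ (-(r * (n' : ℝ))) * jap ξ ^ (-(ρ * ((0 : ℕ) : ℝ)))
                * ((jap x ^ (-r) * w₁ (x, ξ)) * w₂ (x, ξ))
              + CB * jap x ^ (-(r * (n' : ℝ))) * jap ξ ^ (-(ρ * ((0 : ℕ) : ℝ)))
                * (w₁ (x, ξ) * (jap x ^ (-r) * w₂ (x, ξ))) := add_le_add (hCA x ξ) (hCB x ξ)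
          _ = (CA + CB) * jap x ^ (-(r * ((n' + 1 : ℕ) : ℝ))) * jap ξ ^ (-(ρ * ((0 : ℕ) : ℝ)))
                * (w₁ (x, ξ) * w₂ (x, ξ)) := by
              rw [jap_rpow_succ]; ring
lemma inv_bound {d : ℕ} (r ρ : ℝ) (ω₀ : Ed d × Ed d → ℝ) (hω : ∀ z, 0 < ω₀ z)
    {a : Ed d × Ed d → ℂ} (hsm : ContDiff ℝ (⊤ : ℕ∞) a)
    (hbd : ∀ (n m : ℕ) (i : Fin n → Fin d) (j : Fin m → Fin d),
      ∃ C, ∀ x ξ, ‖mixedPartial n m i j a (x, ξ)‖ ≤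
        C * jap x ^ (-(r * (n : ℝ))) * jap ξ ^ (-(ρ * (m : ℝ))) * ω₀ (x, ξ))
    (c : ℝ) (hc : 0 < c) (hlow : ∀ z, c * ω₀ z ≤ ‖a z‖) :
    ∀ N n m : ℕ, n + m ≤ N → ∀ (i : Fin n → Fin d) (j : Fin m → Fin d),
      ∃ C, ∀ x ξ, ‖mixedPartial n m i j (fun z => (a z)⁻¹) (x, ξ)‖ ≤
        C * jap x ^ (-(r * (n : ℝ))) * jap ξ ^ (-(ρ * (m : ℝ))) * (ω₀ (x, ξ))⁻¹ := by
  have h0 : ∀ z, a z ≠ 0 := by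
    intro z
    have h1 : (0 : ℝ) < ‖a z‖ := lt_of_lt_of_le (mul_pos hc (hω z)) (hlow z)
    exact norm_pos_iff.mp h1
  have hainv : ContDiff ℝ (⊤ : ℕ∞) (fun z => (a z)⁻¹) := hsm.inv h0
  intro N
  induction N with
  | zero =>
    intro n m hnm i j
    obtain rfl : n = 0 := by omega
    obtain rfl : m = 0 := by omega
    refine ⟨c⁻¹, fun x ξ => ?_⟩
    simp only [Nat.cast_zero, mul_zero, neg_zero, Real.rpow_zero, mul_one, mixedPartial_zero]
    rw [norm_inv]
    have h2 : c * ω₀ (x, ξ) ≤ ‖a (x, ξ)‖ := hlow (x, ξ)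
    have h3 : (0 : ℝ) < c * ω₀ (x, ξ) := mul_pos hc (hω (x, ξ))
    calc ‖a (x, ξ)‖⁻¹ ≤ (c * ω₀ (x, ξ))⁻¹ := inv_anti₀ h3 h2
    _ = c⁻¹ * (ω₀ (x, ξ))⁻¹ := by rw [mul_inv]
  | succ N IH =>
    intro n m hnm i j
    by_cases hle : n + m ≤ N
    · exact IH n m hle i j
    have hex : n + m = N + 1 := by omega
    -- hypotheses for a⁻¹ at all orders ≤ N, in restricted form
    have Hinv : ∀ (nb mb : ℕ), nb + mb ≤ N →
        ∀ (n' m' : ℕ) (i' : Fin n' → Fin d) (j' : Fin m' → Fin d), n' ≤ nb → m' ≤ mb →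
        ∃ C, ∀ x ξ, ‖mixedPartial n' m' i' j' (fun z => (a z)⁻¹) (x, ξ)‖ ≤
          C * jap x ^ (-(r * (n' : ℝ))) * jap ξ ^ (-(ρ * (m' : ℝ)))
            * ((fun z => (ω₀ z)⁻¹) (x, ξ)) :=
      fun nb mb h n' m' i' j' h1 h2 => IH n' m' (by omega) i' j'
    cases m with
    | succ m' =>
      set j₀ := j (Fin.last m') with hj₀
      set v : Ed d × Ed d := (0, eVec d j₀) with hv
      have hda : ContDiff ℝ (⊤ : ℕ∞) (fun z => fderiv ℝ a z v) := contDiff_dD hsm v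
      -- bounds for the ξ-derivative of a, with weight jap ξ^(-ρ) * ω₀
      have Hda : ∀ (n' m'' : ℕ) (i' : Fin n' → Fin d) (j' : Fin m'' → Fin d),
          n' ≤ n → m'' ≤ m' →
          ∃ C, ∀ x ξ, ‖mixedPartial n' m'' i' j' (fun z => fderiv ℝ a z v) (x, ξ)‖ ≤
            C * jap x ^ (-(r * (n' : ℝ))) * jap ξ ^ (-(ρ * (m'' : ℝ)))
              * ((fun z => jap z.2 ^ (-ρ) * ω₀ z) (x, ξ)) := fun n' m'' i' j' h1 h2 =>
        shift_right_bound r ρ hsm j₀ n' m'' i' j' (hbd n' (m'' + 1) i' (Fin.snoc j' j₀))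
      -- inner product: b₂ = a⁻¹ * (fderiv a · v)
      have Hb₂ : ∀ (n' m'' : ℕ) (i' : Fin n' → Fin d) (j' : Fin m'' → Fin d),
          n' ≤ n → m'' ≤ m' →
          ∃ C, ∀ x ξ, ‖mixedPartial n' m'' i' j'
              (fun z => (a z)⁻¹ * fderiv ℝ a z v) (x, ξ)‖ ≤
            C * jap x ^ (-(r * (n' : ℝ))) * jap ξ ^ (-(ρ * (m'' : ℝ)))
              * ((fun z => (ω₀ z)⁻¹ * (jap z.2 ^ (-ρ) * ω₀ z)) (x, ξ)) := by
        intro n' m'' i' j' h1 h2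
        exact mult_bound r ρ N (fun z => (ω₀ z)⁻¹) (fun z => jap z.2 ^ (-ρ) * ω₀ z)
          (fun z => (a z)⁻¹) (fun z => fderiv ℝ a z v) hainv hda n' m'' (by omega)
          (Hinv n' m'' (by omega)) (fun na ma ia ja ha1 ha2 => Hda na ma ia ja (by omega) (by omega))
          i' j'
      obtain ⟨C, hC⟩ := mult_bound r ρ N (fun z => (ω₀ z)⁻¹)
        (fun z => (ω₀ z)⁻¹ * (jap z.2 ^ (-ρ) * ω₀ z))
        (fun z => (a z)⁻¹) (fun z => (a z)⁻¹ * fderiv ℝ a z v)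
        hainv (hainv.mul (contDiff_dD hsm v)) n m' (by omega)
        (Hinv n m' (by omega)) Hb₂ i (Fin.init j)
      refine ⟨C, fun x ξ => ?_⟩
      have e1 := mixedPartial_succ_right hainv n m' i j (x, ξ)
      have e2 : (fun y => fderiv ℝ (fun w => (a w)⁻¹) y (0, eVec d (j (Fin.last m'))))
          = fun y => -((a y)⁻¹ * ((a y)⁻¹ * fderiv ℝ a y v)) := by
        rw [dD_inv hsm h0]
      rw [e1, e2, mixedPartial_neg, norm_neg]
      have e3 : (fun y => (a y)⁻¹ * ((a y)⁻¹ * fderiv ℝ a y v))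
          = fun y => (a y)⁻¹ * ((fun z => (a z)⁻¹ * fderiv ℝ a z v) y) := by
        funext y; ring
      rw [e3]
      calc ‖mixedPartial n m' i (Fin.init j)
            (fun y => (a y)⁻¹ * ((fun z => (a z)⁻¹ * fderiv ℝ a z v) y)) (x, ξ)‖
          ≤ C * jap x ^ (-(r * (n : ℝ))) * jap ξ ^ (-(ρ * (m' : ℝ)))
            * ((ω₀ (x, ξ))⁻¹ * ((ω₀ (x, ξ))⁻¹ * (jap ξ ^ (-ρ) * ω₀ (x, ξ)))) := hC x ξ
        _ = C * jap x ^ (-(r * (n : ℝ))) * jap ξ ^ (-(ρ * ((m' + 1 : ℕ) : ℝ)))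
            * (ω₀ (x, ξ))⁻¹ := by
          have hne : ω₀ (x, ξ) ≠ 0 := (hω (x, ξ)).ne'
          rw [jap_rpow_succ]
          field_simp
    | zero =>
      cases n with
      | zero => omega
      | succ n' =>
        set i₀ := i (Fin.last n') with hi₀
        set v : Ed d × Ed d := (eVec d i₀, 0) with hv
        have hda : ContDiff ℝ (⊤ : ℕ∞) (fun z => fderiv ℝ a z v) := contDiff_dD hsm v
        have Hda : ∀ (n'' m'' : ℕ) (i' : Fin n'' → Fin d) (j' : Fin m'' → Fin d),
            n'' ≤ n' → m'' ≤ 0 →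
            ∃ C, ∀ x ξ, ‖mixedPartial n'' m'' i' j' (fun z => fderiv ℝ a z v) (x, ξ)‖ ≤
              C * jap x ^ (-(r * (n'' : ℝ))) * jap ξ ^ (-(ρ * (m'' : ℝ)))
                * ((fun z => jap z.1 ^ (-r) * ω₀ z) (x, ξ)) := by
          intro n'' m'' i' j' h1 h2
          obtain rfl : m'' = 0 := by omega
          exact shift_left_bound r ρ hsm i₀ n'' i' j' (hbd (n'' + 1) 0 (Fin.snoc i' i₀) j')
        have Hb₂ : ∀ (n'' m'' : ℕ) (i' : Fin n'' → Fin d) (j' : Fin m'' → Fin d),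
            n'' ≤ n' → m'' ≤ 0 →
            ∃ C, ∀ x ξ, ‖mixedPartial n'' m'' i' j'
                (fun z => (a z)⁻¹ * fderiv ℝ a z v) (x, ξ)‖ ≤
              C * jap x ^ (-(r * (n'' : ℝ))) * jap ξ ^ (-(ρ * (m'' : ℝ)))
                * ((fun z => (ω₀ z)⁻¹ * (jap z.1 ^ (-r) * ω₀ z)) (x, ξ)) := by
          intro n'' m'' i' j' h1 h2
          exact mult_bound r ρ N (fun z => (ω₀ z)⁻¹) (fun z => jap z.1 ^ (-r) * ω₀ z)
            (fun z => (a z)⁻¹) (fun z => fderiv ℝ a z v) hainv hda n'' m'' (by omega)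
            (Hinv n'' m'' (by omega))
            (fun na ma ia ja ha1 ha2 => Hda na ma ia ja (by omega) (by omega)) i' j'
        obtain ⟨C, hC⟩ := mult_bound r ρ N (fun z => (ω₀ z)⁻¹)
          (fun z => (ω₀ z)⁻¹ * (jap z.1 ^ (-r) * ω₀ z))
          (fun z => (a z)⁻¹) (fun z => (a z)⁻¹ * fderiv ℝ a z v)
          hainv (hainv.mul (contDiff_dD hsm v)) n' 0 (by omega)
          (Hinv n' 0 (by omega)) Hb₂ (Fin.init i) j
        refine ⟨C, fun x ξ => ?_⟩
        have e1 := mixedPartial_succ_left hainv n' i j (x, ξ)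
        have e2 : (fun y => fderiv ℝ (fun w => (a w)⁻¹) y (eVec d (i (Fin.last n')), 0))
            = fun y => -((a y)⁻¹ * ((a y)⁻¹ * fderiv ℝ a y v)) := by
          rw [dD_inv hsm h0]
        rw [e1, e2, mixedPartial_neg, norm_neg]
        have e3 : (fun y => (a y)⁻¹ * ((a y)⁻¹ * fderiv ℝ a y v))
            = fun y => (a y)⁻¹ * ((fun z => (a z)⁻¹ * fderiv ℝ a z v) y) := by
          funext y; ring
        rw [e3]
        calc ‖mixedPartial n' 0 (Fin.init i) j
              (fun y => (a y)⁻¹ * ((fun z => (a z)⁻¹ * fderiv ℝ a z v) y)) (x, ξ)‖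
            ≤ C * jap x ^ (-(r * (n' : ℝ))) * jap ξ ^ (-(ρ * ((0 : ℕ) : ℝ)))
              * ((ω₀ (x, ξ))⁻¹ * ((ω₀ (x, ξ))⁻¹ * (jap x ^ (-r) * ω₀ (x, ξ)))) := hC x ξ
          _ = C * jap x ^ (-(r * ((n' + 1 : ℕ) : ℝ))) * jap ξ ^ (-(ρ * ((0 : ℕ) : ℝ)))
              * (ω₀ (x, ξ))⁻¹ := by
            have hne : ω₀ (x, ξ) ≠ 0 := (hω (x, ξ)).ne'
            rw [jap_rpow_succ]
            field_simp

/-- For a ∈ SG^{(ω₀)}_{r,ρ}, invertibility of a (in the sense that 1/a ∈ SG^{(1/ω₀)}_{r,ρ})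
is equivalent to the global lower bound c ω₀ ≤ |a|. -/
theorem stmt9 (d : ℕ) (r ρ : ℝ) (hr : r ∈ Set.Icc (0 : ℝ) 1) (hρ : ρ ∈ Set.Icc (0 : ℝ) 1)
    (ω₀ : Ed d × Ed d → ℝ) (hω₀ : InPrr r ρ ω₀)
    (a : Ed d × Ed d → ℂ) (ha : InSG r ρ ω₀ a) :
    ((∀ z, a z ≠ 0) ∧ InSG r ρ (fun z => (ω₀ z)⁻¹) (fun z => (a z)⁻¹)) ↔
      (∃ c : ℝ, 0 < c ∧ ∀ z, c * ω₀ z ≤ ‖a z‖) := by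
  constructor
  · rintro ⟨h0, hsm', hbd'⟩
    have hω : ∀ z, 0 < ω₀ z := hω₀.1.1
    obtain ⟨C, hC⟩ := hbd' 0 0 (fun k => k.elim0) (fun k => k.elim0)
    have key : ∀ z : Ed d × Ed d, ‖(a z)⁻¹‖ ≤ C * (ω₀ z)⁻¹ := by
      intro z
      have h := hC z.1 z.2
      simp only [Nat.cast_zero, mul_zero, neg_zero, Real.rpow_zero, mul_one,
        mixedPartial_zero] at h
      simpa using h
    have hCpos : 0 < C := by
      have h1 := key (0, 0)
      have h2 : (0 : ℝ) < ‖(a ((0 : Ed d), (0 : Ed d)))⁻¹‖ := by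
        rw [norm_inv]; exact inv_pos.mpr (norm_pos_iff.mpr (h0 (0, 0)))
      have h3 : (0 : ℝ) < (ω₀ (0, 0))⁻¹ := inv_pos.mpr (hω (0, 0))
      nlinarith
    refine ⟨C⁻¹, inv_pos.mpr hCpos, fun z => ?_⟩
    have h1 := key z
    rw [norm_inv] at h1
    have hA : (0 : ℝ) < ‖a z‖ := norm_pos_iff.mpr (h0 z)
    have hw := hω z
    have h4 : ω₀ z ≤ C * ‖a z‖ := by
      have h5 := mul_le_mul_of_nonneg_left h1 (mul_pos hw hA).le
      have e1 : ω₀ z * ‖a z‖ * ‖a z‖⁻¹ = ω₀ z := by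
        rw [mul_assoc, mul_inv_cancel₀ hA.ne', mul_one]
      have e2 : ω₀ z * ‖a z‖ * (C * (ω₀ z)⁻¹) = C * ‖a z‖ * (ω₀ z * (ω₀ z)⁻¹) := by ring
      rw [e1, e2, mul_inv_cancel₀ hw.ne', mul_one] at h5
      exact h5
    have h6 : C⁻¹ * ω₀ z ≤ C⁻¹ * (C * ‖a z‖) :=
      mul_le_mul_of_nonneg_left h4 (inv_pos.mpr hCpos).le
    rw [← mul_assoc, inv_mul_cancel₀ hCpos.ne', one_mul] at h6
    exact h6
  · rintro ⟨c, hc, hlow⟩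
    have hω : ∀ z, 0 < ω₀ z := hω₀.1.1
    have h0 : ∀ z, a z ≠ 0 := fun z =>
      norm_pos_iff.mp (lt_of_lt_of_le (mul_pos hc (hω z)) (hlow z))
    refine ⟨h0, ha.1.inv h0, fun n m i j => ?_⟩
    exact inv_bound r ρ ω₀ hω ha.1 ha.2 c hc hlow (n + m) n m le_rfl i j

end
end

section
/- Let r, ρ ∈ (0,1], ω₀ ∈ P_{r,ρ}(ℝ^{2d}) and a ∈ SG^{(ω₀)}_{r,ρ}(ℝ^{2d}). Then Char_{(ω₀)}(a) = ∅ if and only if a is SG-elliptic with respect to ω₀. -/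
open MeasureTheory Real Complex
open scoped RealInnerProductSpace

noncomputable section

lemma cone_compl_zero' {d : ℕ} : IsOpenCone ({0}ᶜ : Set (Ed d)) := by
  refine ⟨isOpen_compl_singleton, by simp, fun x hx t ht => ?_⟩
  simp only [Set.mem_compl_iff, Set.mem_singleton_iff] at *
  exact smul_ne_zero ht.ne' hx

lemma unit_norm {d : ℕ} {ξ : Ed d} (h : ξ ≠ 0) : ‖(‖ξ‖⁻¹ • ξ)‖ = 1 := by
  rw [norm_smul, norm_inv, norm_norm, inv_mul_cancel₀ (norm_ne_zero_iff.mpr h)]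

lemma smul_unit {d : ℕ} {ξ : Ed d} (h : ξ ≠ 0) : ‖ξ‖ • (‖ξ‖⁻¹ • ξ) = ξ := by
  rw [smul_smul, mul_inv_cancel₀ (norm_ne_zero_iff.mpr h), one_smul]

lemma psiUniform {d : ℕ} (ω₀ : Ed d × Ed d → ℝ) (a : Ed d × Ed d → ℂ)
    (hω : ∀ z, 0 < ω₀ z)
    (h : ∀ x₀ ξ₀ : Ed d, ξ₀ ≠ 0 → PsiInvertibleAt ω₀ a x₀ ξ₀) (M : ℝ) :
    ∃ R c : ℝ, 0 < R ∧ 0 < c ∧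
      ∀ x ξ : Ed d, ‖x‖ ≤ M → R ≤ ‖ξ‖ → c * ω₀ (x, ξ) ≤ ‖a (x, ξ)‖ := by
  have h' : ∀ p : Ed d × Ed d, ∃ X Γ : Set (Ed d), ∃ R c : ℝ,
      IsOpen X ∧ IsOpenCone Γ ∧ 0 < R ∧ 0 < c ∧
      (∀ x ∈ X, ∀ ξ ∈ Γ, R ≤ ‖ξ‖ → c * ω₀ (x, ξ) ≤ ‖a (x, ξ)‖) ∧
      (p.2 ≠ 0 → p.1 ∈ X ∧ p.2 ∈ Γ) := by
    intro p
    by_cases hp : p.2 = 0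
    · exact ⟨∅, {0}ᶜ, 1, 1, isOpen_empty, cone_compl_zero', one_pos, one_pos,
        by simp, fun h0 => absurd hp h0⟩
    · obtain ⟨X, Γ, R, c, hX, hx, hΓ, hξ, hR, hc, hest⟩ := h p.1 p.2 hp
      exact ⟨X, Γ, R, c, hX, hΓ, hR, hc, hest, fun _ => ⟨hx, hξ⟩⟩
  choose Xf Γf Rf cf hXo hΓc hRp hcp hest hmem using h'
  have hKc : IsCompact ((Metric.closedBall (0 : Ed d) M) ×ˢ (Metric.sphere (0 : Ed d) 1)) :=
    (isCompact_closedBall _ _).prod (isCompact_sphere _ _)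
  obtain ⟨t, ht⟩ := hKc.elim_finite_subcover (fun p => Xf p ×ˢ Γf p)
    (fun p => (hXo p).prod (hΓc p).1)
    (by
      intro p hp
      obtain ⟨hp1, hp2⟩ := hp
      have h2 : ‖p.2‖ = 1 := mem_sphere_zero_iff_norm.mp hp2
      have hne : p.2 ≠ 0 := by
        intro h0; rw [h0] at h2; simp at h2
      exact Set.mem_iUnion.mpr ⟨p, (hmem p hne).1, (hmem p hne).2⟩)
  refine ⟨1 + ∑ p ∈ t, Rf p, (1 + ∑ p ∈ t, (cf p)⁻¹)⁻¹, ?_, ?_, ?_⟩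
  · have : (0:ℝ) ≤ ∑ p ∈ t, Rf p := Finset.sum_nonneg fun p _ => (hRp p).le
    linarith
  · have : (0:ℝ) ≤ ∑ p ∈ t, (cf p)⁻¹ := Finset.sum_nonneg fun p _ => (inv_pos.mpr (hcp p)).le
    positivity
  · intro x ξ hx hξ
    have hsum : (0:ℝ) ≤ ∑ p ∈ t, Rf p := Finset.sum_nonneg fun p _ => (hRp p).le
    have hξpos : 0 < ‖ξ‖ := lt_of_lt_of_le (by linarith) hξ
    have hξ0 : ξ ≠ 0 := norm_pos_iff.mp hξpos
    have hmemKc : (x, ‖ξ‖⁻¹ • ξ) ∈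
        (Metric.closedBall (0 : Ed d) M) ×ˢ (Metric.sphere (0 : Ed d) 1) :=
      ⟨mem_closedBall_zero_iff.mpr hx, mem_sphere_zero_iff_norm.mpr (unit_norm hξ0)⟩
    obtain ⟨p, hpt, hxX, huΓ⟩ := Set.mem_iUnion₂.mp (ht hmemKc)
    have hξΓ : ξ ∈ Γf p := by
      have := (hΓc p).2.2 _ huΓ ‖ξ‖ hξpos
      rwa [smul_unit hξ0] at this
    have hRle : Rf p ≤ 1 + ∑ q ∈ t, Rf q := by
      have := Finset.single_le_sum (fun q _ => (hRp q).le) hpt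
      linarith
    have hcle : (1 + ∑ q ∈ t, (cf q)⁻¹)⁻¹ ≤ cf p := by
      have h1 : (cf p)⁻¹ ≤ 1 + ∑ q ∈ t, (cf q)⁻¹ := by
        have := Finset.single_le_sum (fun q (_ : q ∈ t) => (inv_pos.mpr (hcp q)).le) hpt
        linarith
      have := inv_anti₀ (inv_pos.mpr (hcp p)) h1
      simpa using this
    calc (1 + ∑ q ∈ t, (cf q)⁻¹)⁻¹ * ω₀ (x, ξ) ≤ cf p * ω₀ (x, ξ) :=
          mul_le_mul_of_nonneg_right hcle (hω _).le
      _ ≤ ‖a (x, ξ)‖ := hest p x hxX ξ hξΓ (le_trans hRle hξ)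

lemma eUniform {d : ℕ} (ω₀ : Ed d × Ed d → ℝ) (a : Ed d × Ed d → ℂ)
    (hω : ∀ z, 0 < ω₀ z)
    (h : ∀ x₀ ξ₀ : Ed d, x₀ ≠ 0 → EInvertibleAt ω₀ a x₀ ξ₀) (M : ℝ) :
    ∃ R c : ℝ, 0 < R ∧ 0 < c ∧
      ∀ x ξ : Ed d, R ≤ ‖x‖ → ‖ξ‖ ≤ M → c * ω₀ (x, ξ) ≤ ‖a (x, ξ)‖ := by
  have h' : ∀ p : Ed d × Ed d, ∃ Γ X : Set (Ed d), ∃ R c : ℝ,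
      IsOpenCone Γ ∧ IsOpen X ∧ 0 < R ∧ 0 < c ∧
      (∀ x ∈ Γ, R ≤ ‖x‖ → ∀ ξ ∈ X, c * ω₀ (x, ξ) ≤ ‖a (x, ξ)‖) ∧
      (p.1 ≠ 0 → p.1 ∈ Γ ∧ p.2 ∈ X) := by
    intro p
    by_cases hp : p.1 = 0
    · exact ⟨{0}ᶜ, ∅, 1, 1, cone_compl_zero', isOpen_empty, one_pos, one_pos,
        by simp, fun h0 => absurd hp h0⟩
    · obtain ⟨Γ, X, R, c, hΓ, hx, hX, hξ, hR, hc, hest⟩ := h p.1 p.2 hp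
      exact ⟨Γ, X, R, c, hΓ, hX, hR, hc, hest, fun _ => ⟨hx, hξ⟩⟩
  choose Γf Xf Rf cf hΓc hXo hRp hcp hest hmem using h'
  have hKc : IsCompact ((Metric.sphere (0 : Ed d) 1) ×ˢ (Metric.closedBall (0 : Ed d) M)) :=
    (isCompact_sphere _ _).prod (isCompact_closedBall _ _)
  obtain ⟨t, ht⟩ := hKc.elim_finite_subcover (fun p => Γf p ×ˢ Xf p)
    (fun p => (hΓc p).1.prod (hXo p))
    (by
      intro p hp
      obtain ⟨hp1, hp2⟩ := hp
      have h2 : ‖p.1‖ = 1 := mem_sphere_zero_iff_norm.mp hp1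
      have hne : p.1 ≠ 0 := by
        intro h0; rw [h0] at h2; simp at h2
      exact Set.mem_iUnion.mpr ⟨p, (hmem p hne).1, (hmem p hne).2⟩)
  refine ⟨1 + ∑ p ∈ t, Rf p, (1 + ∑ p ∈ t, (cf p)⁻¹)⁻¹, ?_, ?_, ?_⟩
  · have : (0:ℝ) ≤ ∑ p ∈ t, Rf p := Finset.sum_nonneg fun p _ => (hRp p).le
    linarith
  · have : (0:ℝ) ≤ ∑ p ∈ t, (cf p)⁻¹ := Finset.sum_nonneg fun p _ => (inv_pos.mpr (hcp p)).le
    positivity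
  · intro x ξ hx hξ
    have hsum : (0:ℝ) ≤ ∑ p ∈ t, Rf p := Finset.sum_nonneg fun p _ => (hRp p).le
    have hxpos : 0 < ‖x‖ := lt_of_lt_of_le (by linarith) hx
    have hx0 : x ≠ 0 := norm_pos_iff.mp hxpos
    have hmemKc : (‖x‖⁻¹ • x, ξ) ∈
        (Metric.sphere (0 : Ed d) 1) ×ˢ (Metric.closedBall (0 : Ed d) M) :=
      ⟨mem_sphere_zero_iff_norm.mpr (unit_norm hx0), mem_closedBall_zero_iff.mpr hξ⟩
    obtain ⟨p, hpt, huΓ, hξX⟩ := Set.mem_iUnion₂.mp (ht hmemKc)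
    have hxΓ : x ∈ Γf p := by
      have := (hΓc p).2.2 _ huΓ ‖x‖ hxpos
      rwa [smul_unit hx0] at this
    have hRle : Rf p ≤ 1 + ∑ q ∈ t, Rf q := by
      have := Finset.single_le_sum (fun q _ => (hRp q).le) hpt
      linarith
    have hcle : (1 + ∑ q ∈ t, (cf q)⁻¹)⁻¹ ≤ cf p := by
      have h1 : (cf p)⁻¹ ≤ 1 + ∑ q ∈ t, (cf q)⁻¹ := by
        have := Finset.single_le_sum (fun q (_ : q ∈ t) => (inv_pos.mpr (hcp q)).le) hpt
        linarith
      have := inv_anti₀ (inv_pos.mpr (hcp p)) h1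
      simpa using this
    calc (1 + ∑ q ∈ t, (cf q)⁻¹)⁻¹ * ω₀ (x, ξ) ≤ cf p * ω₀ (x, ξ) :=
          mul_le_mul_of_nonneg_right hcle (hω _).le
      _ ≤ ‖a (x, ξ)‖ := hest p x hxΓ (le_trans hRle hx) ξ hξX

lemma psiEUniform {d : ℕ} (ω₀ : Ed d × Ed d → ℝ) (a : Ed d × Ed d → ℂ)
    (hω : ∀ z, 0 < ω₀ z)
    (h : ∀ x₀ ξ₀ : Ed d, x₀ ≠ 0 → ξ₀ ≠ 0 → PsiEInvertibleAt ω₀ a x₀ ξ₀) :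
    ∃ R c : ℝ, 0 < R ∧ 0 < c ∧
      ∀ x ξ : Ed d, R ≤ ‖x‖ → R ≤ ‖ξ‖ → c * ω₀ (x, ξ) ≤ ‖a (x, ξ)‖ := by
  have h' : ∀ p : Ed d × Ed d, ∃ Γ₁ Γ₂ : Set (Ed d), ∃ R c : ℝ,
      IsOpenCone Γ₁ ∧ IsOpenCone Γ₂ ∧ 0 < R ∧ 0 < c ∧
      (∀ x ∈ Γ₁, R ≤ ‖x‖ → ∀ ξ ∈ Γ₂, R ≤ ‖ξ‖ → c * ω₀ (x, ξ) ≤ ‖a (x, ξ)‖) ∧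
      (p.1 ≠ 0 → p.2 ≠ 0 → p.1 ∈ Γ₁ ∧ p.2 ∈ Γ₂) := by
    intro p
    by_cases hp : p.1 ≠ 0 ∧ p.2 ≠ 0
    · obtain ⟨Γ₁, Γ₂, R₁, R₂, c, hΓ₁, hx, hΓ₂, hξ, hR₁, hR₂, hc, hest⟩ := h p.1 p.2 hp.1 hp.2
      refine ⟨Γ₁, Γ₂, max R₁ R₂, c, hΓ₁, hΓ₂, lt_of_lt_of_le hR₁ (le_max_left _ _), hc,
        fun x hxΓ hxR ξ hξΓ hξR => hest x hxΓ (le_trans (le_max_left _ _) hxR) ξ hξΓ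
          (le_trans (le_max_right _ _) hξR), fun _ _ => ⟨hx, hξ⟩⟩
    · refine ⟨{0}ᶜ, ∅, 1, 1, cone_compl_zero', ?_, one_pos, one_pos, by simp,
        fun h1 h2 => absurd ⟨h1, h2⟩ hp⟩
      exact ⟨isOpen_empty, by simp, by simp⟩
  choose Γ1f Γ2f Rf cf hΓ1c hΓ2c hRp hcp hest hmem using h'
  have hKc : IsCompact ((Metric.sphere (0 : Ed d) 1) ×ˢ (Metric.sphere (0 : Ed d) 1)) :=
    (isCompact_sphere _ _).prod (isCompact_sphere _ _)
  obtain ⟨t, ht⟩ := hKc.elim_finite_subcover (fun p => Γ1f p ×ˢ Γ2f p)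
    (fun p => (hΓ1c p).1.prod (hΓ2c p).1)
    (by
      intro p hp
      obtain ⟨hp1, hp2⟩ := hp
      have h1 : ‖p.1‖ = 1 := mem_sphere_zero_iff_norm.mp hp1
      have h2 : ‖p.2‖ = 1 := mem_sphere_zero_iff_norm.mp hp2
      have hne1 : p.1 ≠ 0 := by intro h0; rw [h0] at h1; simp at h1
      have hne2 : p.2 ≠ 0 := by intro h0; rw [h0] at h2; simp at h2
      exact Set.mem_iUnion.mpr ⟨p, (hmem p hne1 hne2).1, (hmem p hne1 hne2).2⟩)
  refine ⟨1 + ∑ p ∈ t, Rf p, (1 + ∑ p ∈ t, (cf p)⁻¹)⁻¹, ?_, ?_, ?_⟩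
  · have : (0:ℝ) ≤ ∑ p ∈ t, Rf p := Finset.sum_nonneg fun p _ => (hRp p).le
    linarith
  · have : (0:ℝ) ≤ ∑ p ∈ t, (cf p)⁻¹ := Finset.sum_nonneg fun p _ => (inv_pos.mpr (hcp p)).le
    positivity
  · intro x ξ hx hξ
    have hsum : (0:ℝ) ≤ ∑ p ∈ t, Rf p := Finset.sum_nonneg fun p _ => (hRp p).le
    have hxpos : 0 < ‖x‖ := lt_of_lt_of_le (by linarith) hx
    have hξpos : 0 < ‖ξ‖ := lt_of_lt_of_le (by linarith) hξ
    have hx0 : x ≠ 0 := norm_pos_iff.mp hxpos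
    have hξ0 : ξ ≠ 0 := norm_pos_iff.mp hξpos
    have hmemKc : (‖x‖⁻¹ • x, ‖ξ‖⁻¹ • ξ) ∈
        (Metric.sphere (0 : Ed d) 1) ×ˢ (Metric.sphere (0 : Ed d) 1) :=
      ⟨mem_sphere_zero_iff_norm.mpr (unit_norm hx0), mem_sphere_zero_iff_norm.mpr (unit_norm hξ0)⟩
    obtain ⟨p, hpt, huΓ1, huΓ2⟩ := Set.mem_iUnion₂.mp (ht hmemKc)
    have hxΓ : x ∈ Γ1f p := by
      have := (hΓ1c p).2.2 _ huΓ1 ‖x‖ hxpos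
      rwa [smul_unit hx0] at this
    have hξΓ : ξ ∈ Γ2f p := by
      have := (hΓ2c p).2.2 _ huΓ2 ‖ξ‖ hξpos
      rwa [smul_unit hξ0] at this
    have hRle : Rf p ≤ 1 + ∑ q ∈ t, Rf q := by
      have := Finset.single_le_sum (fun q _ => (hRp q).le) hpt
      linarith
    have hcle : (1 + ∑ q ∈ t, (cf q)⁻¹)⁻¹ ≤ cf p := by
      have h1 : (cf p)⁻¹ ≤ 1 + ∑ q ∈ t, (cf q)⁻¹ := by
        have := Finset.single_le_sum (fun q (_ : q ∈ t) => (inv_pos.mpr (hcp q)).le) hpt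
        linarith
      have := inv_anti₀ (inv_pos.mpr (hcp p)) h1
      simpa using this
    calc (1 + ∑ q ∈ t, (cf q)⁻¹)⁻¹ * ω₀ (x, ξ) ≤ cf p * ω₀ (x, ξ) :=
          mul_le_mul_of_nonneg_right hcle (hω _).le
      _ ≤ ‖a (x, ξ)‖ := hest p x hxΓ (le_trans hRle hx) ξ hξΓ (le_trans hRle hξ)

/-- Char_{(ω₀)}(a) = ∅ if and only if a is SG-elliptic with respect to ω₀. -/
theorem stmt11 (d : ℕ) (r ρ : ℝ) (hr : r ∈ Set.Ioc (0 : ℝ) 1) (hρ : ρ ∈ Set.Ioc (0 : ℝ) 1)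
    (ω₀ : Ed d × Ed d → ℝ) (hω₀ : InPrr r ρ ω₀)
    (a : Ed d × Ed d → ℂ) (ha : InSG r ρ ω₀ a) :
    CharSet ω₀ a = ∅ ↔ SGElliptic ω₀ a := by
  have hωpos : ∀ z, 0 < ω₀ z := hω₀.1.1
  constructor
  · intro hchar
    have hmem : ∀ p : Ed d × Ed d, p ∉ CharSet ω₀ a := by
      intro p hp; rw [hchar] at hp; exact hp
    have hψ : ∀ x₀ ξ₀ : Ed d, ξ₀ ≠ 0 → PsiInvertibleAt ω₀ a x₀ ξ₀ := by
      intro x₀ ξ₀ hne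
      by_contra hcne
      exact hmem (x₀, ξ₀) (Or.inl (Or.inl ⟨hne, hcne⟩))
    have he : ∀ x₀ ξ₀ : Ed d, x₀ ≠ 0 → EInvertibleAt ω₀ a x₀ ξ₀ := by
      intro x₀ ξ₀ hne
      by_contra hcne
      exact hmem (x₀, ξ₀) (Or.inl (Or.inr ⟨hne, hcne⟩))
    have hψe : ∀ x₀ ξ₀ : Ed d, x₀ ≠ 0 → ξ₀ ≠ 0 → PsiEInvertibleAt ω₀ a x₀ ξ₀ := by
      intro x₀ ξ₀ hne1 hne2
      by_contra hcne
      exact hmem (x₀, ξ₀) (Or.inr ⟨hne1, hne2, hcne⟩)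
    obtain ⟨R₃, c₃, hR₃, hc₃, h₃⟩ := psiEUniform ω₀ a hωpos hψe
    obtain ⟨Rψ, c₁, hRψ, hc₁, h₁⟩ := psiUniform ω₀ a hωpos hψ R₃
    obtain ⟨Re, c₂, hRe, hc₂, h₂⟩ := eUniform ω₀ a hωpos he R₃
    refine ⟨(Metric.closedBall (0 : Ed d) (max R₃ Re)) ×ˢ
        (Metric.closedBall (0 : Ed d) (max R₃ Rψ)),
      (isCompact_closedBall _ _).prod (isCompact_closedBall _ _),
      min c₁ (min c₂ c₃), lt_min hc₁ (lt_min hc₂ hc₃), ?_⟩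
    intro z hz
    have hc1le : min c₁ (min c₂ c₃) ≤ c₁ := min_le_left _ _
    have hc2le : min c₁ (min c₂ c₃) ≤ c₂ := le_trans (min_le_right _ _) (min_le_left _ _)
    have hc3le : min c₁ (min c₂ c₃) ≤ c₃ := le_trans (min_le_right _ _) (min_le_right _ _)
    have hωz : (0:ℝ) ≤ ω₀ z := (hωpos z).le
    have hz' : ¬(‖z.1‖ ≤ max R₃ Re ∧ ‖z.2‖ ≤ max R₃ Rψ) := by
      rintro ⟨h1, h2⟩
      exact hz ⟨mem_closedBall_zero_iff.mpr h1, mem_closedBall_zero_iff.mpr h2⟩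
    have hzeq : (z.1, z.2) = z := rfl
    rcases not_and_or.mp hz' with h1 | h2
    · push_neg at h1
      by_cases hξ : R₃ ≤ ‖z.2‖
      · have := h₃ z.1 z.2 ((le_max_left _ _).trans h1.le) hξ
        rw [hzeq] at this
        exact le_trans (mul_le_mul_of_nonneg_right hc3le hωz) this
      · have := h₂ z.1 z.2 ((le_max_right _ _).trans h1.le) (not_le.mp hξ).le
        rw [hzeq] at this
        exact le_trans (mul_le_mul_of_nonneg_right hc2le hωz) this
    · push_neg at h2
      by_cases hx : R₃ ≤ ‖z.1‖
      · have := h₃ z.1 z.2 hx ((le_max_left _ _).trans h2.le)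
        rw [hzeq] at this
        exact le_trans (mul_le_mul_of_nonneg_right hc3le hωz) this
      · have := h₁ z.1 z.2 (not_le.mp hx).le ((le_max_right _ _).trans h2.le)
        rw [hzeq] at this
        exact le_trans (mul_le_mul_of_nonneg_right hc1le hωz) this
  · rintro ⟨K, hK, c, hc, hell⟩
    obtain ⟨M, hM⟩ := hK.isBounded.subset_closedBall 0
    set R : ℝ := max M 0 + 1 with hRdef
    have hR : 0 < R := by positivity
    have hout1 : ∀ z : Ed d × Ed d, R ≤ ‖z.1‖ → z ∉ K := by
      intro z h hzK
      have h1 : ‖z‖ ≤ M := mem_closedBall_zero_iff.mp (hM hzK)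
      have h2 : ‖z.1‖ ≤ ‖z‖ := norm_fst_le z
      have h3 : M ≤ max M 0 := le_max_left _ _
      rw [hRdef] at h
      linarith
    have hout2 : ∀ z : Ed d × Ed d, R ≤ ‖z.2‖ → z ∉ K := by
      intro z h hzK
      have h1 : ‖z‖ ≤ M := mem_closedBall_zero_iff.mp (hM hzK)
      have h2 : ‖z.2‖ ≤ ‖z‖ := norm_snd_le z
      have h3 : M ≤ max M 0 := le_max_left _ _
      rw [hRdef] at h
      linarith
    rw [Set.eq_empty_iff_forall_notMem]
    intro z hz
    rcases hz with (⟨hne, hni⟩ | ⟨hne, hni⟩) | ⟨hne1, hne2, hni⟩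
    · exact hni ⟨Set.univ, {0}ᶜ, R, c, isOpen_univ, trivial, cone_compl_zero', hne, hR, hc,
        fun x _ ξ _ hRξ => hell (x, ξ) (hout2 (x, ξ) hRξ)⟩
    · exact hni ⟨{0}ᶜ, Set.univ, R, c, cone_compl_zero', hne, isOpen_univ, trivial, hR, hc,
        fun x _ hRx ξ _ => hell (x, ξ) (hout1 (x, ξ) hRx)⟩
    · exact hni ⟨{0}ᶜ, {0}ᶜ, R, R, c, cone_compl_zero', hne1, cone_compl_zero', hne2,
        hR, hR, hc, fun x _ hRx ξ _ _ => hell (x, ξ) (hout1 (x, ξ) hRx)⟩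

end
end
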